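/- arXiv:2305.17815 — 10 statements merged into one kernel-verified Lean document; each statement's English description precedes it below -/
import Mathlib

section
/- Let n ≥ 1, let E : Fin n → ℝ be energy levels, β > 0, and let τ be the associated Gibbs distribution. For probability vectors p and q on Fin n, the following are equivalent: (a) the thermomajorization curves of (p, E) and (q, E) at inverse temperature β coincide, i.e., for every real k > 0, ∑ over {i | p i * Real.exp (β * E i) = k} of p i equals ∑ over {i | q i * Real.exp (β * E i) = k} of q i; (b) there exists a stochastic matrix G with G · τ = τ and G · p = q, and moreover D₁(p‖τ) = D₁(q‖τ). -/
open Finset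

/-- Kullback–Leibler divergence `D₁(p‖q)`. -/
noncomputable def D1 {S : Type*} [Fintype S] (p q : S → ℝ) : ℝ :=
  ∑ x ∈ Finset.univ.filter (fun x => p x ≠ 0), p x * Real.log (p x / q x)

/-- The thermomajorization curves of `(a, F)` and `(b, F)` at inverse temperature `β`
coincide: for every positive slope `k`, the total probability mass on segments of
slope `k` agrees. -/
def CurvesCoincide {Y : Type*} [Fintype Y] (β : ℝ) (F : Y → ℝ) (a b : Y → ℝ) : Prop :=
  ∀ k : ℝ, 0 < k →
    ∑ y ∈ Finset.univ.filter (fun y => a y * Real.exp (β * F y) = k), a y =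
    ∑ y ∈ Finset.univ.filter (fun y => b y * Real.exp (β * F y) = k), b y

/-!
Write `a / τ` for the likelihood ratio of `a` with respect to the Gibbs state. Both conditions
depend on `p` and `q` only through the law of their ratios under `τ`: the curve records the
mass `c · τ{a / τ = c}` at each slope, and `D₁(a‖τ) = ∑ τ φ(a / τ)` with `φ t = t log t`.
When the two laws agree, the matrix spreading each level set `{p / τ = c}` over
`{q / τ = c}` in proportion to `τ` is Gibbs-preserving and maps `p` to `q`. Conversely, for a
Gibbs-preserving `G` with `G p = q`, every `q i / τ i` is a `τ`-weighted average of the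
`p j / τ j`, so Jensen gives `D₁(q‖τ) ≤ D₁(p‖τ)`, and equality forces `G` to map each level
set of `p / τ` into the level set of `q / τ` with the same ratio, which preserves its `τ`-mass.
-/

section LevelMass

variable {S : Type*} [Fintype S]

/-- The law of the ratio `a / τ` under the weights `τ`. -/
noncomputable def levelMass (τ a : S → ℝ) (c : ℝ) : ℝ :=
  ∑ x with a x / τ x = c, τ x

lemma sum_filter_ratio_eq_mul_levelMass {τ : S → ℝ} (hτ : ∀ x, τ x ≠ 0) (a : S → ℝ) (c : ℝ) :
    ∑ x with a x / τ x = c, a x = c * levelMass τ a c := by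
  rw [levelMass, mul_sum]
  refine sum_congr rfl fun x hx => ?_
  rw [← (mem_filter.1 hx).2, div_mul_cancel₀ _ (hτ x)]

lemma levelMass_eq_zero_of_neg {τ a : S → ℝ} (hτ : ∀ x, 0 < τ x) (ha : ∀ x, 0 ≤ a x)
    {c : ℝ} (hc : c < 0) : levelMass τ a c = 0 :=
  sum_eq_zero fun x hx =>
    absurd (mem_filter.1 hx).2 ((div_nonneg (ha x) (hτ x).le).trans_lt' hc).ne'

lemma sum_mul_comp_ratio_eq_sum_levelMass (τ a : S → ℝ) {T : Finset ℝ}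
    (hT : ∀ x, a x / τ x ∈ T) (f : ℝ → ℝ) :
    ∑ x, τ x * f (a x / τ x) = ∑ c ∈ T, levelMass τ a c * f c := by
  rw [← sum_fiberwise_of_maps_to (fun x _ => hT x)]
  refine sum_congr rfl fun c _ => ?_
  rw [levelMass, sum_mul]
  exact sum_congr rfl fun x hx => by rw [(mem_filter.1 hx).2]

lemma sum_mul_comp_ratio_eq_of_levelMass_eq {τ a b : S → ℝ}
    (h : ∀ c, levelMass τ a c = levelMass τ b c) (f : ℝ → ℝ) :
    ∑ x, τ x * f (a x / τ x) = ∑ x, τ x * f (b x / τ x) := by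
  classical
  let T := univ.image (fun x => a x / τ x) ∪ univ.image (fun x => b x / τ x)
  rw [sum_mul_comp_ratio_eq_sum_levelMass τ a (T := T) (by simp [T]),
    sum_mul_comp_ratio_eq_sum_levelMass τ b (T := T) (by simp [T])]
  simp only [h]

lemma levelMass_eq_of_forall_pos {τ a b : S → ℝ} (hτ : ∀ x, 0 < τ x)
    (ha : ∀ x, 0 ≤ a x) (hb : ∀ x, 0 ≤ b x)
    (h : ∀ c, 0 < c → levelMass τ a c = levelMass τ b c) (c : ℝ) :
    levelMass τ a c = levelMass τ b c := by
  classical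
  have h_ne_zero : ∀ c ≠ 0, levelMass τ a c = levelMass τ b c := fun c hc =>
    hc.lt_or_gt.elim
      (fun hc => by rw [levelMass_eq_zero_of_neg hτ ha hc, levelMass_eq_zero_of_neg hτ hb hc])
      (h c)
  rcases eq_or_ne c 0 with rfl | hc
  · -- the mass at level `0` is what the other levels leave of the total
    let T := insert 0 (univ.image (fun x => a x / τ x) ∪ univ.image (fun x => b x / τ x))
    have hmass (d : S → ℝ) (hd : ∀ x, d x / τ x ∈ T) :
        ∑ x, τ x = levelMass τ d 0 + ∑ c ∈ T.erase 0, levelMass τ d c := by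
      simpa [add_sum_erase T _ (mem_insert_self 0 _)] using
        sum_mul_comp_ratio_eq_sum_levelMass τ d hd (fun _ => 1)
    have := (hmass a (by simp [T])).symm.trans (hmass b (by simp [T]))
    rwa [sum_congr rfl fun c hc => h_ne_zero c (ne_of_mem_erase hc), add_right_cancel_iff]
      at this
  · exact h_ne_zero c hc

end LevelMass

section Divergence

variable {S : Type*} [Fintype S]

lemma D1_eq_sum_mul_log_ratio {τ : S → ℝ} (hτ : ∀ x, τ x ≠ 0) (a : S → ℝ) :
    D1 a τ = ∑ x, τ x * (a x / τ x * Real.log (a x / τ x)) := by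
  rw [D1, sum_filter_of_ne fun x _ h => left_ne_zero_of_mul h]
  exact sum_congr rfl fun x _ => by rw [← mul_assoc, mul_div_cancel₀ _ (hτ x)]

lemma D1_eq_of_levelMass_eq {τ a b : S → ℝ} (hτ : ∀ x, τ x ≠ 0)
    (h : ∀ c, levelMass τ a c = levelMass τ b c) : D1 a τ = D1 b τ := by
  rw [D1_eq_sum_mul_log_ratio hτ, D1_eq_sum_mul_log_ratio hτ]
  exact sum_mul_comp_ratio_eq_of_levelMass_eq h fun t => t * Real.log t

end Divergence

section Curves

variable {Y : Type*} [Fintype Y] {β : ℝ} {F τ : Y → ℝ}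

lemma mul_exp_eq_iff_div_gibbs_eq
    (hτ : ∀ i, τ i = Real.exp (-β * F i) / ∑ j, Real.exp (-β * F j))
    (hZ : ∑ j, Real.exp (-β * F j) ≠ 0) (a : Y → ℝ) (y : Y) (k : ℝ) :
    a y * Real.exp (β * F y) = k ↔ a y / τ y = k * ∑ j, Real.exp (-β * F j) := by
  rw [hτ, div_div_eq_mul_div, neg_mul, Real.exp_neg, div_inv_eq_mul, mul_right_comm,
    mul_left_inj' hZ]

lemma curvesCoincide_iff_levelMass_eq [Nonempty Y]
    (hτ : ∀ i, τ i = Real.exp (-β * F i) / ∑ j, Real.exp (-β * F j)) (a b : Y → ℝ) :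
    CurvesCoincide β F a b ↔ ∀ c, 0 < c → levelMass τ a c = levelMass τ b c := by
  have hZ : 0 < ∑ j, Real.exp (-β * F j) := sum_pos (fun j _ => Real.exp_pos _) univ_nonempty
  have hτ0 (i : Y) : τ i ≠ 0 := by rw [hτ]; positivity
  have hfiber (d : Y → ℝ) (k : ℝ) : ∑ y with d y * Real.exp (β * F y) = k, d y =
      (k * ∑ j, Real.exp (-β * F j)) * levelMass τ d (k * ∑ j, Real.exp (-β * F j)) := by
    simp only [mul_exp_eq_iff_div_gibbs_eq hτ hZ.ne', sum_filter_ratio_eq_mul_levelMass hτ0]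
  constructor
  · intro h c hc
    have := h (c / ∑ j, Real.exp (-β * F j)) (div_pos hc hZ)
    rwa [hfiber, hfiber, div_mul_cancel₀ _ hZ.ne', mul_right_inj' hc.ne'] at this
  · intro h k hk
    rw [hfiber, hfiber, h _ (mul_pos hk hZ)]

end Curves

section Transport

variable {S : Type*} [Fintype S]

lemma levelMass_ratio_pos {τ : S → ℝ} (hτ : ∀ x, 0 < τ x) (a : S → ℝ) (x : S) :
    0 < levelMass τ a (a x / τ x) :=
  (hτ x).trans_le <| single_le_sum (fun y _ => (hτ y).le) (by simp)

/-- Column `j` spreads the level set of `p / τ` through `j` over the level set of `q / τ`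
with the same ratio, in proportion to `τ`. -/
noncomputable def transportMatrix (τ p q : S → ℝ) (i j : S) : ℝ :=
  if q i / τ i = p j / τ j then τ i / levelMass τ q (p j / τ j) else 0

variable {τ p q : S → ℝ}

lemma transportMatrix_nonneg (hτ : ∀ x, 0 < τ x) (i j : S) : 0 ≤ transportMatrix τ p q i j := by
  unfold transportMatrix
  split_ifs with h
  · exact div_nonneg (hτ i).le (h ▸ levelMass_ratio_pos hτ q i).le
  · exact le_rfl

lemma sum_transportMatrix_left (hτ : ∀ x, 0 < τ x)
    (h : ∀ c, levelMass τ p c = levelMass τ q c) (j : S) :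
    ∑ i, transportMatrix τ p q i j = 1 := by
  simp only [transportMatrix]
  rw [← sum_filter, ← sum_div, ← levelMass]
  exact div_self (h _ ▸ levelMass_ratio_pos hτ p j).ne'

lemma sum_transportMatrix_mul (hτ : ∀ x, 0 < τ x)
    (h : ∀ c, levelMass τ p c = levelMass τ q c) (f : ℝ → ℝ) (i : S) :
    ∑ j, transportMatrix τ p q i j * (τ j * f (p j / τ j)) = τ i * f (q i / τ i) := by
  simp only [transportMatrix, ite_mul, zero_mul]
  rw [← sum_filter]
  calc ∑ j with q i / τ i = p j / τ j, τ i / levelMass τ q (p j / τ j) * (τ j * f (p j / τ j))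
      = τ i / levelMass τ q (q i / τ i) * f (q i / τ i) * ∑ j with q i / τ i = p j / τ j, τ j := by
        rw [mul_sum]
        refine sum_congr rfl fun j hj => ?_
        rw [← (mem_filter.1 hj).2]
        ring
    _ = τ i * f (q i / τ i) := by
        rw [filter_congr fun j _ => eq_comm, ← levelMass, h, div_mul_eq_mul_div,
          div_mul_cancel₀ _ (levelMass_ratio_pos hτ q i).ne']

end Transport

lemma exists_gibbs_preserving_of_levelMass_eq {S : Type*} [Fintype S] {τ p q : S → ℝ}
    (hτ : ∀ x, 0 < τ x) (h : ∀ c, levelMass τ p c = levelMass τ q c) :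
    ∃ G : S → S → ℝ,
      (∀ i j, 0 ≤ G i j) ∧ (∀ j, ∑ i, G i j = 1) ∧
      (∀ i, ∑ j, G i j * τ j = τ i) ∧ (∀ i, ∑ j, G i j * p j = q i) :=
  ⟨transportMatrix τ p q, transportMatrix_nonneg hτ, sum_transportMatrix_left hτ h,
    fun i => by simpa using sum_transportMatrix_mul hτ h (fun _ => 1) i,
    fun i => by
      simpa [mul_div_cancel₀ _ (hτ _).ne'] using sum_transportMatrix_mul hτ h id i⟩

lemma StrictConvexOn.eq_sum_of_sum_mul_sum_eq {S : Type*} [Fintype S] {s : Set ℝ} {φ : ℝ → ℝ}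
    (hφ : StrictConvexOn ℝ s φ) {τ : S → ℝ} (hτ : ∀ i, 0 < τ i) {w : S → S → ℝ}
    (hw0 : ∀ i j, 0 ≤ w i j) (hw1 : ∀ i, ∑ j, w i j = 1) {x : S → ℝ} (hx : ∀ j, x j ∈ s)
    (h : ∑ i, τ i * φ (∑ j, w i j * x j) = ∑ i, τ i * ∑ j, w i j * φ (x j))
    {i j : S} (hij : w i j ≠ 0) : x j = ∑ k, w i k * x k := by
  have hjensen (i : S) : τ i * φ (∑ j, w i j * x j) ≤ τ i * ∑ j, w i j * φ (x j) :=
    mul_le_mul_of_nonneg_left (by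
      simpa only [smul_eq_mul] using
        hφ.convexOn.map_sum_le (fun j _ => hw0 i j) (hw1 i) (fun j _ => hx j)) (hτ i).le
  have hrow := mul_left_cancel₀ (hτ i).ne' <|
    (sum_eq_sum_iff_of_le fun i _ => hjensen i).1 h i (mem_univ i)
  simpa only [smul_eq_mul] using
    (hφ.map_sum_eq_iff' (fun j _ => hw0 i j) (hw1 i) (fun j _ => hx j)).1
      (by simpa only [smul_eq_mul] using hrow) j (mem_univ j) hij

section Stochastic

variable {S : Type*} [Fintype S] {τ p q : S → ℝ} {G : S → S → ℝ}

lemma div_eq_div_of_D1_eq (hτ : ∀ x, 0 < τ x) (hp : ∀ x, 0 ≤ p x) (hG0 : ∀ i j, 0 ≤ G i j)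
    (hGcol : ∀ j, ∑ i, G i j = 1) (hGτ : ∀ i, ∑ j, G i j * τ j = τ i)
    (hGp : ∀ i, ∑ j, G i j * p j = q i) (hD : D1 p τ = D1 q τ) {i j : S} (hij : G i j ≠ 0) :
    p j / τ j = q i / τ i := by
  have hτ0 (x : S) : τ x ≠ 0 := (hτ x).ne'
  -- row `i` of `G`, reweighted by `τ`, averages the ratios `p / τ` into `q i / τ i`
  let w i j := G i j * τ j / τ i
  have hw0 (i j : S) : 0 ≤ w i j := by have := hG0 i j; have := hτ i; have := hτ j; positivity
  have hw1 (i : S) : ∑ j, w i j = 1 := by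
    rw [← sum_div, hGτ, div_self (hτ0 i)]
  have hwp (i : S) : ∑ j, w i j * (p j / τ j) = q i / τ i := by
    rw [← hGp, sum_div]
    refine sum_congr rfl fun j _ => ?_
    simp only [w]
    field_simp [hτ0 i, hτ0 j]
  have hcol (f : ℝ → ℝ) :
      ∑ i, τ i * ∑ j, w i j * f (p j / τ j) = ∑ j, τ j * f (p j / τ j) := by
    simp_rw [mul_sum]
    rw [sum_comm]
    refine sum_congr rfl fun j _ => ?_
    calc ∑ i, τ i * (w i j * f (p j / τ j)) = ∑ i, G i j * (τ j * f (p j / τ j)) :=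
          sum_congr rfl fun i _ => by simp only [w]; field_simp [hτ0 i]
      _ = τ j * f (p j / τ j) := by rw [← sum_mul, hGcol, one_mul]
  have hmix : ∑ i, τ i * (∑ j, w i j * (p j / τ j)) * Real.log (∑ j, w i j * (p j / τ j)) =
      ∑ i, τ i * ∑ j, w i j * (p j / τ j * Real.log (p j / τ j)) :=
    calc _ = D1 q τ := by simp only [hwp, D1_eq_sum_mul_log_ratio hτ0, mul_assoc]
      _ = D1 p τ := hD.symm
      _ = _ := by rw [D1_eq_sum_mul_log_ratio hτ0]; exact (hcol fun t => t * Real.log t).symm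
  have hjensen := Real.strictConvexOn_mul_log.eq_sum_of_sum_mul_sum_eq hτ hw0 hw1
    (x := fun j => p j / τ j) (fun j => Set.mem_Ici.2 (div_nonneg (hp j) (hτ j).le))
    (by simpa only [mul_assoc] using hmix) (i := i) (j := j)
    (by have := hτ i; have := hτ j; positivity)
  rwa [hwp] at hjensen

lemma levelMass_eq_of_ratio_eq_on_support (hGcol : ∀ j, ∑ i, G i j = 1) (hGτ : ∀ i, ∑ j, G i j * τ j = τ i)
    (hsupp : ∀ i j, G i j ≠ 0 → p j / τ j = q i / τ i) (c : ℝ) :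
    levelMass τ p c = levelMass τ q c := by
  have hcol (j : S) : ∑ i with q i / τ i = c, G i j = if p j / τ j = c then 1 else 0 := by
    split_ifs with hj
    · rw [← hGcol j]
      exact sum_subset (filter_subset _ _) fun i _ hi => by_contra fun hG =>
        hi (mem_filter.2 ⟨mem_univ i, (hsupp i j hG).symm.trans hj⟩)
    · exact sum_eq_zero fun i hi => by_contra fun hG =>
        hj ((hsupp i j hG).trans (mem_filter.1 hi).2)
  symm
  calc levelMass τ q c = ∑ i with q i / τ i = c, ∑ j, G i j * τ j :=
        sum_congr rfl fun i _ => (hGτ i).symm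
    _ = ∑ j, (∑ i with q i / τ i = c, G i j) * τ j := by
        rw [sum_comm]; simp only [sum_mul]
    _ = levelMass τ p c := by
        simp only [hcol, ite_mul, one_mul, zero_mul]
        rw [← sum_filter, levelMass]

end Stochastic

theorem thermomajorization_coincide_iff_zero_entropy_production_general
    {n : ℕ} (hn : 1 ≤ n) (E : Fin n → ℝ) (β : ℝ)
    (τ : Fin n → ℝ)
    (hτ : ∀ i, τ i = Real.exp (-β * E i) / ∑ j, Real.exp (-β * E j))
    (p q : Fin n → ℝ)
    (hp0 : ∀ i, 0 ≤ p i)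
    (hq0 : ∀ i, 0 ≤ q i) :
    CurvesCoincide β E p q ↔
      ((∃ G : Fin n → Fin n → ℝ,
          (∀ i j, 0 ≤ G i j) ∧ (∀ j, ∑ i, G i j = 1) ∧
          (∀ i, ∑ j, G i j * τ j = τ i) ∧
          (∀ i, ∑ j, G i j * p j = q i)) ∧
        D1 p τ = D1 q τ) := by
  have : Nonempty (Fin n) := ⟨⟨0, hn⟩⟩
  have hτpos (i : Fin n) : 0 < τ i := by
    rw [hτ]
    exact div_pos (Real.exp_pos _) (sum_pos (fun j _ => Real.exp_pos _) univ_nonempty)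
  rw [curvesCoincide_iff_levelMass_eq hτ]
  constructor
  · intro hpos
    have hmass := levelMass_eq_of_forall_pos hτpos hp0 hq0 hpos
    exact ⟨exists_gibbs_preserving_of_levelMass_eq hτpos hmass,
      D1_eq_of_levelMass_eq (fun i => (hτpos i).ne') hmass⟩
  · rintro ⟨⟨G, hG0, hGcol, hGτ, hGp⟩, hD⟩ c -
    exact levelMass_eq_of_ratio_eq_on_support hGcol hGτ
      (fun i j => div_eq_div_of_D1_eq hτpos hp0 hG0 hGcol hGτ hGp hD) c

/-- Theorem 1: coincidence of thermomajorization curves is equivalent to the existence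
of a Gibbs-preserving stochastic map sending `p` to `q` with zero entropy production. -/
theorem thermomajorization_coincide_iff_zero_entropy_production
    {n : ℕ} (hn : 1 ≤ n) (E : Fin n → ℝ) (β : ℝ) (hβ : 0 < β)
    (τ : Fin n → ℝ)
    (hτ : ∀ i, τ i = Real.exp (-β * E i) / ∑ j, Real.exp (-β * E j))
    (p q : Fin n → ℝ)
    (hp0 : ∀ i, 0 ≤ p i) (hp1 : ∑ i, p i = 1)
    (hq0 : ∀ i, 0 ≤ q i) (hq1 : ∑ i, q i = 1) :
    CurvesCoincide β E p q ↔
      ((∃ G : Fin n → Fin n → ℝ,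
          (∀ i j, 0 ≤ G i j) ∧ (∀ j, ∑ i, G i j = 1) ∧
          (∀ i, ∑ j, G i j * τ j = τ i) ∧
          (∀ i, ∑ j, G i j * p j = q i)) ∧
        D1 p τ = D1 q τ) :=
  thermomajorization_coincide_iff_zero_entropy_production_general hn E β τ hτ p q hp0 hq0
end

section
/- Let τ be a strictly positive probability vector on Fin n (τ i > 0 for all i), let G be a stochastic matrix with G · τ = τ, and let p be a probability vector such that D₁(p‖τ) = D₁(G · p‖τ). Define the recovery matrix R by R i j = G j i * τ i / τ j. Then R is a stochastic matrix, R · τ = τ, and R · (G · p) = p. -/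
open Finset

lemma sub_one_le_mul_log {x : ℝ} (hx : 0 < x) : x - 1 ≤ x * Real.log x := by
  have h := Real.log_le_sub_one_of_pos (inv_pos.mpr hx)
  rw [Real.log_inv] at h
  have hxx : x * x⁻¹ = 1 := mul_inv_cancel₀ hx.ne'
  nlinarith

lemma eq_one_of_mul_log {x : ℝ} (hx : 0 < x) (h : x * Real.log x = x - 1) : x = 1 := by
  by_contra hne
  have h2 := Real.log_lt_sub_one_of_pos (inv_pos.mpr hx)
    (by simp only [ne_eq, inv_eq_one]; exact hne)
  rw [Real.log_inv] at h2
  have hxx : x * x⁻¹ = 1 := mul_inv_cancel₀ hx.ne'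
  nlinarith

/-- Equality case of the data-processing inequality (classical Petz recovery):
the recovery matrix `R i j = G j i * τ i / τ j` is stochastic, preserves `τ`,
and recovers `p` from `G · p`. -/
theorem petz_recovery
    {n : ℕ} (τ : Fin n → ℝ) (hτpos : ∀ i, 0 < τ i) (hτ1 : ∑ i, τ i = 1)
    (G : Fin n → Fin n → ℝ)
    (hG0 : ∀ i j, 0 ≤ G i j) (hG1 : ∀ j, ∑ i, G i j = 1)
    (hGτ : ∀ i, ∑ j, G i j * τ j = τ i)
    (p : Fin n → ℝ) (hp0 : ∀ i, 0 ≤ p i) (hp1 : ∑ i, p i = 1)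
    (hD : D1 p τ = D1 (fun i => ∑ j, G i j * p j) τ)
    (R : Fin n → Fin n → ℝ) (hR : ∀ i j, R i j = G j i * τ i / τ j) :
    (∀ i j, 0 ≤ R i j) ∧ (∀ j, ∑ i, R i j = 1) ∧
    (∀ i, ∑ j, R i j * τ j = τ i) ∧
    (∀ i, ∑ j, R i j * (∑ k, G j k * p k) = p i) := by
  have hτne : ∀ i, τ i ≠ 0 := fun i => (hτpos i).ne'
  set q : Fin n → ℝ := fun i => ∑ j, G i j * p j with hqdef
  have hq0 : ∀ i, 0 ≤ q i := fun i =>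
    Finset.sum_nonneg fun j _ => mul_nonneg (hG0 i j) (hp0 j)
  have hD1p : D1 p τ = ∑ j, p j * Real.log (p j / τ j) := by
    simp only [D1, Finset.sum_filter]
    refine Finset.sum_congr rfl fun j _ => ?_
    by_cases h : p j = 0 <;> simp [h]
  have hD1q : D1 q τ = ∑ i, q i * Real.log (q i / τ i) := by
    simp only [D1, Finset.sum_filter]
    refine Finset.sum_congr rfl fun i _ => ?_
    by_cases h : q i = 0 <;> simp [h]
  set T : Fin n → ℝ := fun i =>
    (∑ j, G i j * p j * Real.log (p j / τ j)) - q i * Real.log (q i / τ i) with hTdef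
  have hTsum : ∑ i, T i = 0 := by
    have h1 : ∑ i, ∑ j, G i j * p j * Real.log (p j / τ j)
        = ∑ j, p j * Real.log (p j / τ j) := by
      rw [Finset.sum_comm]
      refine Finset.sum_congr rfl fun j _ => ?_
      calc ∑ i, G i j * p j * Real.log (p j / τ j)
          = (∑ i, G i j) * (p j * Real.log (p j / τ j)) := by
            rw [Finset.sum_mul]; exact Finset.sum_congr rfl fun i _ => by ring
        _ = p j * Real.log (p j / τ j) := by rw [hG1 j, one_mul]
    simp only [hTdef]
    rw [Finset.sum_sub_distrib, h1, ← hD1p, ← hD1q, hD, sub_self]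
  have main : ∀ i, 0 ≤ T i ∧
      (T i = 0 → ∀ j, G i j ≠ 0 → p j * τ i = q i * τ j) := by
    intro i
    by_cases hqi : q i = 0
    · have hz : ∀ j ∈ Finset.univ, G i j * p j = 0 := by
        have hsum : ∑ k, G i k * p k = 0 := hqi
        exact (Finset.sum_eq_zero_iff_of_nonneg
          (fun k _ => mul_nonneg (hG0 i k) (hp0 k))).mp hsum
      constructor
      · have hTi : T i = 0 := by
          simp only [hTdef]
          rw [hqi]
          have : ∑ j, G i j * p j * Real.log (p j / τ j) = 0 :=
            Finset.sum_eq_zero fun j hj => by rw [hz j hj, zero_mul]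
          rw [this]; ring
        rw [hTi]
      · intro _ j hGij
        have hpj : p j = 0 := by
          rcases mul_eq_zero.mp (hz j (Finset.mem_univ j)) with h | h
          · exact absurd h hGij
          · exact h
        rw [hpj, hqi]; ring
    · have hqpos : 0 < q i := lt_of_le_of_ne (hq0 i) (Ne.symm hqi)
      set c := q i / τ i with hc
      have hcpos : 0 < c := div_pos hqpos (hτpos i)
      have hlog : ∀ j, p j * Real.log (p j / (τ j * c))
          = p j * Real.log (p j / τ j) - p j * Real.log c := by
        intro j
        by_cases hpj : p j = 0
        · simp [hpj]
        · rw [show p j / (τ j * c) = (p j / τ j) / c by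
            field_simp,
            Real.log_div (div_ne_zero hpj (hτne j)) hcpos.ne']
          ring
      have hsumt : ∑ j, G i j * (p j * Real.log (p j / (τ j * c)) - p j + τ j * c)
          = T i := by
        have e1 : ∀ j, G i j * (p j * Real.log (p j / (τ j * c)) - p j + τ j * c)
            = G i j * p j * Real.log (p j / τ j) - (G i j * p j) * Real.log c
              - G i j * p j + (G i j * τ j) * c := by
          intro j; rw [hlog j]; ring
        simp only [e1]
        rw [Finset.sum_add_distrib, Finset.sum_sub_distrib, Finset.sum_sub_distrib,
          ← Finset.sum_mul, ← Finset.sum_mul, hGτ i]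
        have hq' : ∑ j, G i j * p j = q i := rfl
        rw [hq']
        simp only [hTdef]
        rw [hc]
        have h2 : τ i * (q i / τ i) = q i := by
          rw [mul_comm, div_mul_cancel₀ _ (hτne i)]
        linarith [h2]
      have ht0 : ∀ j ∈ Finset.univ,
          0 ≤ G i j * (p j * Real.log (p j / (τ j * c)) - p j + τ j * c) := by
        intro j _
        rcases eq_or_lt_of_le (hG0 i j) with hG | hG
        · rw [← hG, zero_mul]
        · apply mul_nonneg hG.le
          by_cases hpj : p j = 0
          · rw [hpj]
            have he : (0:ℝ) * Real.log (0 / (τ j * c)) - 0 + τ j * c = τ j * c := by ring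
            rw [he]
            exact mul_nonneg (hτpos j).le hcpos.le
          · have hppos : 0 < p j := lt_of_le_of_ne (hp0 j) (Ne.symm hpj)
            set d := τ j * c with hd
            have hdpos : 0 < d := mul_pos (hτpos j) hcpos
            set x := p j / d with hx
            have hxpos : 0 < x := div_pos hppos hdpos
            have hpx : p j = x * d := by rw [hx]; field_simp
            have hkey := sub_one_le_mul_log hxpos
            rw [hpx]
            nlinarith [mul_le_mul_of_nonneg_right hkey hdpos.le]
      constructor
      · rw [← hsumt]; exact Finset.sum_nonneg ht0
      · intro hTi j hGij
        have hGpos : 0 < G i j := lt_of_le_of_ne (hG0 i j) (Ne.symm hGij)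
        have hall := (Finset.sum_eq_zero_iff_of_nonneg ht0).mp
          (by rw [hsumt, hTi]) j (Finset.mem_univ j)
        have hinner : p j * Real.log (p j / (τ j * c)) - p j + τ j * c = 0 := by
          rcases mul_eq_zero.mp hall with h | h
          · exact absurd h hGij
          · exact h
        by_cases hpj : p j = 0
        · exfalso
          rw [hpj] at hinner
          simp only [zero_div, Real.log_zero, mul_zero, zero_mul, sub_zero, zero_add] at hinner
          nlinarith [mul_pos (hτpos j) hcpos]
        · have hppos : 0 < p j := lt_of_le_of_ne (hp0 j) (Ne.symm hpj)
          set d := τ j * c with hd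
          have hdpos : 0 < d := mul_pos (hτpos j) hcpos
          set x := p j / d with hx
          have hxpos : 0 < x := div_pos hppos hdpos
          have hpx : p j = x * d := by rw [hx]; field_simp
          rw [hpx] at hinner
          have h2 : d * (x * Real.log x - x + 1) = 0 := by linear_combination hinner
          have h3 : x * Real.log x - x + 1 = 0 :=
            (mul_eq_zero.mp h2).resolve_left hdpos.ne'
          have hx1 : x = 1 := eq_one_of_mul_log hxpos (by linarith)
          rw [hpx, hx1, hd, hc, one_mul, mul_assoc, div_mul_cancel₀ _ (hτne i)]
          ring
  have hT0 : ∀ i, 0 ≤ T i := fun i => (main i).1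
  have hTzero := (Finset.sum_eq_zero_iff_of_nonneg (fun i _ => hT0 i)).mp hTsum
  have key : ∀ i j, G i j ≠ 0 → p j * τ i = q i * τ j :=
    fun i j h => (main i).2 (hTzero i (Finset.mem_univ i)) j h
  refine ⟨fun i j => ?_, fun j => ?_, fun i => ?_, fun i => ?_⟩
  · rw [hR i j]
    exact div_nonneg (mul_nonneg (hG0 j i) (hτpos i).le) (hτpos j).le
  · simp only [hR]
    rw [← Finset.sum_div, hGτ j, div_self (hτne j)]
  · have e : ∀ j', R i j' * τ j' = G j' i * τ i := by
      intro j'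
      rw [hR]
      exact div_mul_cancel₀ _ (hτne j')
    simp only [e]
    rw [← Finset.sum_mul, hG1 i, one_mul]
  · have hterm : ∀ j, R i j * (∑ k, G j k * p k) = G j i * p i := by
      intro j
      rw [hR]
      by_cases hG : G j i = 0
      · simp [hG]
      · have hk := key j i hG
        have hq' : (∑ k, G j k * p k) = q j := rfl
        rw [hq', div_mul_eq_mul_div, div_eq_iff (hτne j)]
        linear_combination (-(G j i)) * hk
    calc ∑ j, R i j * (∑ k, G j k * p k) = ∑ j, G j i * p i :=
          Finset.sum_congr rfl fun j _ => hterm j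
      _ = (∑ j, G j i) * p i := by rw [Finset.sum_mul]
      _ = p i := by rw [hG1 i, one_mul]
end

section
/- Let E : Fin n → ℝ and F : Fin m → ℝ be energies, β > 0, and let τ and τ_c be the associated Gibbs distributions on Fin n and Fin m respectively, both strictly positive. Let p, q be probability vectors on Fin n and c a probability vector on Fin m. Suppose there exists a stochastic matrix G on Fin n × Fin m such that G · (τ ⊗ τ_c) = τ ⊗ τ_c and G · (p ⊗ c) = q ⊗ c, and suppose D₁(p ⊗ c‖τ ⊗ τ_c) = D₁(q ⊗ c‖τ ⊗ τ_c). Then there exists a stochastic matrix G' on Fin n with G' · τ = τ and G' · p = q. -/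
open Finset


/-- Log-sum inequality with equality condition (B > 0 case). -/
lemma logsum {ι : Type*} (s : Finset ι) (a b : ι → ℝ) (A B : ℝ)
    (hA : ∑ i ∈ s, a i = A) (hBs : ∑ i ∈ s, b i = B)
    (ha : ∀ i ∈ s, 0 ≤ a i) (hb : ∀ i ∈ s, 0 ≤ b i)
    (hab : ∀ i ∈ s, b i = 0 → a i = 0)
    (hB : 0 < B) :
    (if A = 0 then (0:ℝ) else A * Real.log (A / B))
      ≤ ∑ i ∈ s.filter (fun i => a i ≠ 0), a i * Real.log (a i / b i) ∧
    ((∑ i ∈ s.filter (fun i => a i ≠ 0), a i * Real.log (a i / b i)) =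
      (if A = 0 then (0:ℝ) else A * Real.log (A / B)) →
        ∀ i ∈ s, a i * B = A * b i) := by
  classical
  by_cases hA0 : A = 0
  · have hz : ∀ i ∈ s, a i = 0 := by
      refine (Finset.sum_eq_zero_iff_of_nonneg ha).1 ?_
      rw [hA, hA0]
    have hfe : s.filter (fun i => a i ≠ 0) = ∅ := by
      rw [Finset.filter_eq_empty_iff]
      intro i hi
      simp [hz i hi]
    rw [hfe]
    simp only [Finset.sum_empty, if_pos hA0]
    exact ⟨le_refl _, fun _ i hi => by rw [hz i hi, hA0]; ring⟩
  · have hApos : 0 < A := lt_of_le_of_ne (hA ▸ Finset.sum_nonneg ha) (Ne.symm hA0)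
    rw [if_neg hA0]
    set f := s.filter (fun i => a i ≠ 0) with hfdef
    have hfs : f ⊆ s := Finset.filter_subset _ _
    have hmem : ∀ i ∈ f, 0 < a i ∧ 0 < b i := by
      intro i hi
      rcases Finset.mem_filter.1 hi with ⟨his, hane⟩
      refine ⟨lt_of_le_of_ne (ha i his) (Ne.symm hane), ?_⟩
      rcases lt_or_eq_of_le (hb i his) with h | h
      · exact h
      · exact absurd (hab i his h.symm) hane
    have hsumaf : ∑ i ∈ f, a i = A := by
      rw [hfdef, Finset.sum_filter_ne_zero s, hA]
    have hdecomp : ∀ i ∈ f, a i * Real.log (a i / b i)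
        = a i * Real.log (a i * B / (b i * A)) + a i * Real.log (A / B) := by
      intro i hi
      obtain ⟨hai, hbi⟩ := hmem i hi
      rw [← mul_add, ← Real.log_mul (by positivity) (by positivity)]
      congr 2
      field_simp
    have hS : ∑ i ∈ f, a i * Real.log (a i / b i)
        = (∑ i ∈ f, a i * Real.log (a i * B / (b i * A))) + A * Real.log (A / B) := by
      rw [Finset.sum_congr rfl hdecomp, Finset.sum_add_distrib, ← Finset.sum_mul, hsumaf]
    set X := ∑ i ∈ f, a i * Real.log (a i * B / (b i * A)) with hXdef
    have hterm : ∀ i ∈ f, a i * (1 - 1 / (a i * B / (b i * A))) = a i - A / B * b i := by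
      intro i hi
      obtain ⟨hai, hbi⟩ := hmem i hi
      field_simp
    have hlog_ge : ∀ t : ℝ, 0 < t → 1 - 1 / t ≤ Real.log t := by
      intro t ht
      have h1 := Real.log_le_sub_one_of_pos (x := 1/t) (by positivity)
      rw [Real.log_div one_ne_zero (ne_of_gt ht), Real.log_one] at h1
      linarith
    have hlog_gt : ∀ t : ℝ, 0 < t → t ≠ 1 → 1 - 1 / t < Real.log t := by
      intro t ht htne
      have h1 := Real.log_lt_sub_one_of_pos (x := 1/t) (by positivity)
        (by
          intro h
          rw [div_eq_one_iff_eq (ne_of_gt ht)] at h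
          exact htne h.symm)
      rw [Real.log_div one_ne_zero (ne_of_gt ht), Real.log_one] at h1
      linarith
    have hXY : ∀ i ∈ f, a i - A / B * b i ≤ a i * Real.log (a i * B / (b i * A)) := by
      intro i hi
      obtain ⟨hai, hbi⟩ := hmem i hi
      have ht : (0:ℝ) < a i * B / (b i * A) := by positivity
      have h2 := mul_le_mul_of_nonneg_left (hlog_ge _ ht) (le_of_lt hai)
      rw [hterm i hi] at h2
      linarith
    have hYX : ∑ i ∈ f, (a i - A / B * b i) ≤ X := Finset.sum_le_sum hXY
    have hbf : ∑ i ∈ f, b i ≤ B := by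
      rw [← hBs]
      exact Finset.sum_le_sum_of_subset_of_nonneg hfs (fun i hi _ => hb i hi)
    have hY : ∑ i ∈ f, (a i - A / B * b i) = A - A / B * (∑ i ∈ f, b i) := by
      rw [Finset.sum_sub_distrib, hsumaf, ← Finset.mul_sum]
    have hYpos : 0 ≤ ∑ i ∈ f, (a i - A / B * b i) := by
      rw [hY]
      have h1 : A / B * (∑ i ∈ f, b i) ≤ A / B * B :=
        mul_le_mul_of_nonneg_left hbf (by positivity)
      have h2 : A / B * B = A := by field_simp
      linarith
    have hXpos : 0 ≤ X := le_trans hYpos hYX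
    constructor
    · rw [hS]; linarith
    · intro heq
      rw [hS] at heq
      have hX0 : X = 0 := by linarith
      have hY0 : ∑ i ∈ f, (a i - A / B * b i) = 0 := le_antisymm (hX0 ▸ hYX) hYpos
      have hterm0 : ∀ i ∈ f, a i * Real.log (a i * B / (b i * A)) - (a i - A / B * b i) = 0 := by
        have hsum0 : ∑ i ∈ f, (a i * Real.log (a i * B / (b i * A)) - (a i - A / B * b i)) = 0 := by
          rw [Finset.sum_sub_distrib, ← hXdef, hX0, hY0]; ring
        intro i hi
        refine (Finset.sum_eq_zero_iff_of_nonneg ?_).1 hsum0 i hi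
        intro j hj
        have := hXY j hj
        linarith
      have hratio : ∀ i ∈ f, a i * B = A * b i := by
        intro i hi
        obtain ⟨hai, hbi⟩ := hmem i hi
        by_contra hne
        have ht : (0:ℝ) < a i * B / (b i * A) := by positivity
        have htne : a i * B / (b i * A) ≠ 1 := by
          intro h1
          rw [div_eq_one_iff_eq (by positivity)] at h1
          exact hne (by linarith)
        have h2 := mul_lt_mul_of_pos_left (hlog_gt _ ht htne) hai
        rw [hterm i hi] at h2
        have := hterm0 i hi
        linarith
      have hsumb : ∑ i ∈ f, b i = B := by
        rw [hY] at hY0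
        have hAB : 0 < A / B := by positivity
        have hABB : A / B * B = A := by field_simp
        have h3 : A / B * (∑ i ∈ f, b i) = A / B * B := by
          rw [hABB]; linarith
        exact mul_left_cancel₀ (ne_of_gt hAB) h3
      have hrest : ∑ i ∈ s \ f, b i = 0 := by
        have h4 := Finset.sum_sdiff (f := b) hfs
        rw [hsumb, hBs] at h4
        linarith
      intro i hi
      by_cases hif : i ∈ f
      · exact hratio i hif
      · have hbi0 : b i = 0 := (Finset.sum_eq_zero_iff_of_nonneg
          (fun j hj => hb j (Finset.mem_sdiff.1 hj).1)).1 hrest i (Finset.mem_sdiff.2 ⟨hi, hif⟩)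
        rw [hbi0, hab i hi hbi0]; ring


lemma moment_levels {ι κ : Type*} [Fintype ι] [Fintype κ]
    (u : ι → ℝ) (w : κ → ℝ) (a : ι → ℝ) (b : κ → ℝ)
    (h : ∀ k : ℕ, ∑ j, a j * u j ^ k = ∑ i, b i * w i ^ k) (r : ℝ) :
    ∑ j ∈ Finset.univ.filter (fun j => u j = r), a j
      = ∑ i ∈ Finset.univ.filter (fun i => w i = r), b i := by
  classical
  have hpoly : ∀ P : Polynomial ℝ, ∑ j, a j * P.eval (u j) = ∑ i, b i * P.eval (w i) := by
    intro P
    induction P using Polynomial.induction_on' with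
    | add p q hp hq =>
      simp only [Polynomial.eval_add, mul_add, Finset.sum_add_distrib, hp, hq]
    | monomial k coef =>
      simp only [Polynomial.eval_monomial]
      have h1 : ∀ j, a j * (coef * u j ^ k) = coef * (a j * u j ^ k) := fun j => by ring
      have h2 : ∀ i, b i * (coef * w i ^ k) = coef * (b i * w i ^ k) := fun i => by ring
      simp only [h1, h2, ← Finset.mul_sum, h k]
  set T : Finset ℝ := (Finset.univ.image u) ∪ (Finset.univ.image w) with hT
  set P : Polynomial ℝ := ∏ s ∈ T.erase r, (Polynomial.X - Polynomial.C s) with hP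
  have hPeval : ∀ t : ℝ, P.eval t = ∏ s ∈ T.erase r, (t - s) := by
    intro t
    rw [hP, Polynomial.eval_prod]
    simp
  have hzero : ∀ t ∈ T, t ≠ r → P.eval t = 0 := by
    intro t ht htr
    rw [hPeval]
    exact Finset.prod_eq_zero (Finset.mem_erase.2 ⟨htr, ht⟩) (sub_self t)
  have hKne : P.eval r ≠ 0 := by
    rw [hPeval]
    refine Finset.prod_ne_zero_iff.2 (fun s hs => ?_)
    have := (Finset.mem_erase.1 hs).1
    exact sub_ne_zero.2 (Ne.symm this)
  have key := hpoly P
  have hL : ∑ j, a j * P.eval (u j)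
      = P.eval r * ∑ j ∈ Finset.univ.filter (fun j => u j = r), a j := by
    rw [← Finset.sum_filter_add_sum_filter_not Finset.univ (fun j => u j = r)]
    have e1 : ∑ j ∈ Finset.univ.filter (fun j => ¬ u j = r), a j * P.eval (u j) = 0 := by
      refine Finset.sum_eq_zero (fun j hj => ?_)
      have hju : u j ∈ T := Finset.mem_union_left _ (Finset.mem_image_of_mem u (Finset.mem_univ j))
      rw [hzero (u j) hju (Finset.mem_filter.1 hj).2, mul_zero]
    have e2 : ∑ j ∈ Finset.univ.filter (fun j => u j = r), a j * P.eval (u j)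
        = P.eval r * ∑ j ∈ Finset.univ.filter (fun j => u j = r), a j := by
      rw [Finset.mul_sum]
      refine Finset.sum_congr rfl (fun j hj => ?_)
      rw [(Finset.mem_filter.1 hj).2]
      ring
    rw [e1, e2, add_zero]
  have hR : ∑ i, b i * P.eval (w i)
      = P.eval r * ∑ i ∈ Finset.univ.filter (fun i => w i = r), b i := by
    rw [← Finset.sum_filter_add_sum_filter_not Finset.univ (fun i => w i = r)]
    have e1 : ∑ i ∈ Finset.univ.filter (fun i => ¬ w i = r), b i * P.eval (w i) = 0 := by
      refine Finset.sum_eq_zero (fun i hi => ?_)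
      have hiw : w i ∈ T := Finset.mem_union_right _ (Finset.mem_image_of_mem w (Finset.mem_univ i))
      rw [hzero (w i) hiw (Finset.mem_filter.1 hi).2, mul_zero]
    have e2 : ∑ i ∈ Finset.univ.filter (fun i => w i = r), b i * P.eval (w i)
        = P.eval r * ∑ i ∈ Finset.univ.filter (fun i => w i = r), b i := by
      rw [Finset.mul_sum]
      refine Finset.sum_congr rfl (fun i hi => ?_)
      rw [(Finset.mem_filter.1 hi).2]
      ring
    rw [e1, e2, add_zero]
  rw [hL, hR] at key
  exact mul_left_cancel₀ hKne key

/-- Theorem 3: a catalytic thermal operation with zero entropy production can be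
replaced by a noncatalytic thermal operation. -/
theorem catalytic_zero_entropy_production_implies_noncatalytic
    {n m : ℕ} (E : Fin n → ℝ) (F : Fin m → ℝ) (β : ℝ) (hβ : 0 < β)
    (τ : Fin n → ℝ)
    (hτ : ∀ i, τ i = Real.exp (-β * E i) / ∑ j, Real.exp (-β * E j))
    (τc : Fin m → ℝ)
    (hτc : ∀ x, τc x = Real.exp (-β * F x) / ∑ y, Real.exp (-β * F y))
    (hτpos : ∀ i, 0 < τ i) (hτcpos : ∀ x, 0 < τc x)
    (p q : Fin n → ℝ)
    (hp0 : ∀ i, 0 ≤ p i) (hp1 : ∑ i, p i = 1)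
    (hq0 : ∀ i, 0 ≤ q i) (hq1 : ∑ i, q i = 1)
    (c : Fin m → ℝ) (hc0 : ∀ x, 0 ≤ c x) (hc1 : ∑ x, c x = 1)
    (hG : ∃ G : (Fin n × Fin m) → (Fin n × Fin m) → ℝ,
      (∀ y z, 0 ≤ G y z) ∧ (∀ z, ∑ y, G y z = 1) ∧
      (∀ y, ∑ z, G y z * (τ z.1 * τc z.2) = τ y.1 * τc y.2) ∧
      (∀ y, ∑ z, G y z * (p z.1 * c z.2) = q y.1 * c y.2))
    (hD : D1 (fun y : Fin n × Fin m => p y.1 * c y.2)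
            (fun y : Fin n × Fin m => τ y.1 * τc y.2) =
          D1 (fun y : Fin n × Fin m => q y.1 * c y.2)
            (fun y : Fin n × Fin m => τ y.1 * τc y.2)) :
    ∃ G' : Fin n → Fin n → ℝ,
      (∀ i j, 0 ≤ G' i j) ∧ (∀ j, ∑ i, G' i j = 1) ∧
      (∀ i, ∑ j, G' i j * τ j = τ i) ∧
      (∀ i, ∑ j, G' i j * p j = q i) := by
  classical
  obtain ⟨G, hG0, hGcol, hGτe, hGqe⟩ := hG
  have hTpos : ∀ z : Fin n × Fin m, 0 < τ z.1 * τc z.2 :=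
    fun z => mul_pos (hτpos z.1) (hτcpos z.2)
  -- per-output log-sum inequality with equality condition
  have hls : ∀ y : Fin n × Fin m,
      (if q y.1 * c y.2 = 0 then (0:ℝ) else
        (q y.1 * c y.2) * Real.log ((q y.1 * c y.2) / (τ y.1 * τc y.2)))
      ≤ ∑ z ∈ Finset.univ.filter (fun z => G y z * (p z.1 * c z.2) ≠ 0),
          (G y z * (p z.1 * c z.2)) *
            Real.log ((G y z * (p z.1 * c z.2)) / (G y z * (τ z.1 * τc z.2))) ∧
      ((∑ z ∈ Finset.univ.filter (fun z => G y z * (p z.1 * c z.2) ≠ 0),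
          (G y z * (p z.1 * c z.2)) *
            Real.log ((G y z * (p z.1 * c z.2)) / (G y z * (τ z.1 * τc z.2))))
        = (if q y.1 * c y.2 = 0 then (0:ℝ) else
            (q y.1 * c y.2) * Real.log ((q y.1 * c y.2) / (τ y.1 * τc y.2))) →
        ∀ z ∈ Finset.univ, (G y z * (p z.1 * c z.2)) * (τ y.1 * τc y.2)
          = (q y.1 * c y.2) * (G y z * (τ z.1 * τc z.2))) := by
    intro y
    exact logsum Finset.univ
      (fun z => G y z * (p z.1 * c z.2)) (fun z => G y z * (τ z.1 * τc z.2))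
      (q y.1 * c y.2) (τ y.1 * τc y.2) (hGqe y) (hGτe y)
      (fun z _ => mul_nonneg (hG0 y z) (mul_nonneg (hp0 z.1) (hc0 z.2)))
      (fun z _ => mul_nonneg (hG0 y z) (le_of_lt (hTpos z)))
      (fun z _ hz => by
        have hz' : G y z * (τ z.1 * τc z.2) = 0 := hz
        have hGz : G y z = 0 := by
          rcases mul_eq_zero.1 hz' with h | h
          · exact h
          · exact absurd h (ne_of_gt (hTpos z))
        show G y z * (p z.1 * c z.2) = 0
        rw [hGz, zero_mul])
      (hTpos y)
  -- identify D1(p⊗c‖τ⊗τc) with the sum of the per-output joint divergences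
  have hDP : D1 (fun y : Fin n × Fin m => p y.1 * c y.2)
      (fun y : Fin n × Fin m => τ y.1 * τc y.2)
      = ∑ y : Fin n × Fin m,
          ∑ z ∈ Finset.univ.filter (fun z => G y z * (p z.1 * c z.2) ≠ 0),
          (G y z * (p z.1 * c z.2)) *
            Real.log ((G y z * (p z.1 * c z.2)) / (G y z * (τ z.1 * τc z.2))) := by
    unfold D1
    rw [Finset.sum_filter]
    have hswap : ∀ y : Fin n × Fin m,
        (∑ z ∈ Finset.univ.filter (fun z => G y z * (p z.1 * c z.2) ≠ 0),
          (G y z * (p z.1 * c z.2)) *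
            Real.log ((G y z * (p z.1 * c z.2)) / (G y z * (τ z.1 * τc z.2))))
        = ∑ z : Fin n × Fin m, (if G y z * (p z.1 * c z.2) ≠ 0 then
            (G y z * (p z.1 * c z.2)) *
            Real.log ((G y z * (p z.1 * c z.2)) / (G y z * (τ z.1 * τc z.2))) else 0) :=
      fun y => Finset.sum_filter _ _
    rw [Finset.sum_congr rfl (fun y _ => hswap y), Finset.sum_comm]
    refine Finset.sum_congr rfl (fun z _ => ?_)
    by_cases hPz : p z.1 * c z.2 = 0
    · simp [hPz]
    · have hterm : ∀ y : Fin n × Fin m,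
          (if G y z * (p z.1 * c z.2) ≠ 0 then
            (G y z * (p z.1 * c z.2)) *
            Real.log ((G y z * (p z.1 * c z.2)) / (G y z * (τ z.1 * τc z.2))) else 0)
          = G y z * ((p z.1 * c z.2) *
              Real.log ((p z.1 * c z.2) / (τ z.1 * τc z.2))) := by
        intro y
        by_cases hGz : G y z = 0
        · simp [hGz]
        · rw [if_pos (mul_ne_zero hGz hPz), mul_div_mul_left _ _ hGz]
          ring
      rw [Finset.sum_congr rfl (fun y _ => hterm y), ← Finset.sum_mul, hGcol z, one_mul,
        if_pos hPz]
  -- identify D1(q⊗c‖τ⊗τc) with the sum of the per-output lower bounds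
  have hDQ : D1 (fun y : Fin n × Fin m => q y.1 * c y.2)
      (fun y : Fin n × Fin m => τ y.1 * τc y.2)
      = ∑ y : Fin n × Fin m, (if q y.1 * c y.2 = 0 then (0:ℝ) else
          (q y.1 * c y.2) * Real.log ((q y.1 * c y.2) / (τ y.1 * τc y.2))) := by
    unfold D1
    rw [Finset.sum_filter]
    refine Finset.sum_congr rfl (fun y _ => ?_)
    by_cases h : q y.1 * c y.2 = 0
    · simp [h]
    · simp [h]
  -- each per-output gap vanishes
  have hgap0 : ∀ y : Fin n × Fin m,
      (∑ z ∈ Finset.univ.filter (fun z => G y z * (p z.1 * c z.2) ≠ 0),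
          (G y z * (p z.1 * c z.2)) *
            Real.log ((G y z * (p z.1 * c z.2)) / (G y z * (τ z.1 * τc z.2))))
        = (if q y.1 * c y.2 = 0 then (0:ℝ) else
            (q y.1 * c y.2) * Real.log ((q y.1 * c y.2) / (τ y.1 * τc y.2))) := by
    have hsum0 : ∑ y : Fin n × Fin m,
        ((∑ z ∈ Finset.univ.filter (fun z => G y z * (p z.1 * c z.2) ≠ 0),
          (G y z * (p z.1 * c z.2)) *
            Real.log ((G y z * (p z.1 * c z.2)) / (G y z * (τ z.1 * τc z.2))))
          - (if q y.1 * c y.2 = 0 then (0:ℝ) else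
            (q y.1 * c y.2) * Real.log ((q y.1 * c y.2) / (τ y.1 * τc y.2)))) = 0 := by
      rw [Finset.sum_sub_distrib, ← hDP, ← hDQ, hD, sub_self]
    intro y
    have := (Finset.sum_eq_zero_iff_of_nonneg
      (fun y _ => sub_nonneg.2 (hls y).1)).1 hsum0 y (Finset.mem_univ y)
    linarith [sub_eq_zero.1 this]
  -- the key pointwise ratio identity
  have hE1 : ∀ y z : Fin n × Fin m,
      (G y z * (p z.1 * c z.2)) * (τ y.1 * τc y.2)
        = (q y.1 * c y.2) * (G y z * (τ z.1 * τc z.2)) :=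
    fun y z => (hls y).2 (hgap0 y) z (Finset.mem_univ z)
  have hratio : ∀ y z : Fin n × Fin m, G y z ≠ 0 →
      (p z.1 * c z.2) * (τ y.1 * τc y.2) = (q y.1 * c y.2) * (τ z.1 * τc z.2) := by
    intro y z hGne
    have h := hE1 y z
    have h2 : G y z * ((p z.1 * c z.2) * (τ y.1 * τc y.2))
        = G y z * ((q y.1 * c y.2) * (τ z.1 * τc z.2)) := by linear_combination h
    exact mul_left_cancel₀ hGne h2
  -- moment identities on the product space
  have hMom : ∀ k : ℕ,
      ∑ z : Fin n × Fin m, (p z.1 * c z.2) * ((p z.1 / τ z.1) * (c z.2 / τc z.2)) ^ k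
        = ∑ y : Fin n × Fin m, (q y.1 * c y.2) * ((q y.1 / τ y.1) * (c y.2 / τc y.2)) ^ k := by
    intro k
    have hrwp : ∀ z : Fin n × Fin m,
        (p z.1 / τ z.1) * (c z.2 / τc z.2) = (p z.1 * c z.2) / (τ z.1 * τc z.2) :=
      fun z => div_mul_div_comm _ _ _ _
    have hrwq : ∀ y : Fin n × Fin m,
        (q y.1 / τ y.1) * (c y.2 / τc y.2) = (q y.1 * c y.2) / (τ y.1 * τc y.2) :=
      fun y => div_mul_div_comm _ _ _ _
    calc ∑ z : Fin n × Fin m, (p z.1 * c z.2) * ((p z.1 / τ z.1) * (c z.2 / τc z.2)) ^ k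
        = ∑ z : Fin n × Fin m, ∑ y : Fin n × Fin m,
            G y z * ((p z.1 * c z.2) * ((p z.1 / τ z.1) * (c z.2 / τc z.2)) ^ k) := by
          refine Finset.sum_congr rfl (fun z _ => ?_)
          rw [← Finset.sum_mul, hGcol z, one_mul]
      _ = ∑ y : Fin n × Fin m, ∑ z : Fin n × Fin m,
            G y z * ((p z.1 * c z.2) * ((p z.1 / τ z.1) * (c z.2 / τc z.2)) ^ k) :=
          Finset.sum_comm
      _ = ∑ y : Fin n × Fin m, ∑ z : Fin n × Fin m,
            G y z * ((p z.1 * c z.2) * ((q y.1 / τ y.1) * (c y.2 / τc y.2)) ^ k) := by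
          refine Finset.sum_congr rfl (fun y _ => Finset.sum_congr rfl (fun z _ => ?_))
          by_cases hGz : G y z = 0
          · simp [hGz]
          · by_cases hPz : p z.1 * c z.2 = 0
            · simp [hPz]
            · have heq : (p z.1 / τ z.1) * (c z.2 / τc z.2)
                  = (q y.1 / τ y.1) * (c y.2 / τc y.2) := by
                rw [hrwp z, hrwq y]
                rw [div_eq_div_iff (ne_of_gt (hTpos z)) (ne_of_gt (hTpos y))]
                exact hratio y z hGz
              rw [heq]
      _ = ∑ y : Fin n × Fin m,
            (∑ z : Fin n × Fin m, G y z * (p z.1 * c z.2)) *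
              ((q y.1 / τ y.1) * (c y.2 / τc y.2)) ^ k := by
          refine Finset.sum_congr rfl (fun y _ => ?_)
          rw [Finset.sum_mul]
          exact Finset.sum_congr rfl (fun z _ => by ring)
      _ = ∑ y : Fin n × Fin m, (q y.1 * c y.2) * ((q y.1 / τ y.1) * (c y.2 / τc y.2)) ^ k := by
          refine Finset.sum_congr rfl (fun y _ => ?_)
          rw [hGqe y]
  -- factor out the catalyst moments
  have hMc : ∀ k : ℕ, 0 < ∑ x, c x * (c x / τc x) ^ k := by
    intro k
    have hex : ∃ x, c x ≠ 0 := by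
      by_contra h
      push_neg at h
      rw [Finset.sum_congr rfl (fun x _ => h x)] at hc1
      simp at hc1
    obtain ⟨x₀, hx₀⟩ := hex
    have hcx : 0 < c x₀ := lt_of_le_of_ne (hc0 x₀) (Ne.symm hx₀)
    refine Finset.sum_pos' (fun x _ => mul_nonneg (hc0 x)
      (pow_nonneg (div_nonneg (hc0 x) (le_of_lt (hτcpos x))) k)) ⟨x₀, Finset.mem_univ x₀, ?_⟩
    have := hτcpos x₀
    positivity
  have hM : ∀ k : ℕ, ∑ j, p j * (p j / τ j) ^ k = ∑ i, q i * (q i / τ i) ^ k := by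
    intro k
    have h1 := hMom k
    rw [Fintype.sum_prod_type, Fintype.sum_prod_type] at h1
    have h2 : (∑ j, p j * (p j / τ j) ^ k) * (∑ x, c x * (c x / τc x) ^ k)
        = (∑ i, q i * (q i / τ i) ^ k) * (∑ x, c x * (c x / τc x) ^ k) := by
      rw [Finset.sum_mul_sum, Finset.sum_mul_sum]
      calc ∑ j, ∑ x, (p j * (p j / τ j) ^ k) * (c x * (c x / τc x) ^ k)
          = ∑ j, ∑ x, (p j * c x) * ((p j / τ j) * (c x / τc x)) ^ k := by
            refine Finset.sum_congr rfl (fun j _ => Finset.sum_congr rfl (fun x _ => ?_))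
            rw [mul_pow]; ring
        _ = ∑ i, ∑ x, (q i * c x) * ((q i / τ i) * (c x / τc x)) ^ k := h1
        _ = ∑ i, ∑ x, (q i * (q i / τ i) ^ k) * (c x * (c x / τc x) ^ k) := by
            refine Finset.sum_congr rfl (fun i _ => Finset.sum_congr rfl (fun x _ => ?_))
            rw [mul_pow]; ring
    exact mul_right_cancel₀ (ne_of_gt (hMc k)) h2
  have hM' : ∀ k : ℕ, ∑ j, τ j * (p j / τ j) ^ k = ∑ i, τ i * (q i / τ i) ^ k := by
    intro k
    cases k with
    | zero => simp
    | succ k =>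
      have h1 : ∀ j, τ j * (p j / τ j) ^ (k + 1) = p j * (p j / τ j) ^ k := by
        intro j
        have hτj := ne_of_gt (hτpos j)
        rw [pow_succ]
        field_simp
      have h2 : ∀ i, τ i * (q i / τ i) ^ (k + 1) = q i * (q i / τ i) ^ k := by
        intro i
        have hτi := ne_of_gt (hτpos i)
        rw [pow_succ]
        field_simp
      rw [Finset.sum_congr rfl (fun j _ => h1 j), Finset.sum_congr rfl (fun i _ => h2 i)]
      exact hM k
  -- level-set mass identities
  have hlvP : ∀ r : ℝ,
      ∑ j ∈ Finset.univ.filter (fun j => p j / τ j = r), p j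
        = ∑ i ∈ Finset.univ.filter (fun i => q i / τ i = r), q i :=
    moment_levels _ _ _ _ hM
  have hlvT : ∀ r : ℝ,
      ∑ j ∈ Finset.univ.filter (fun j => p j / τ j = r), τ j
        = ∑ i ∈ Finset.univ.filter (fun i => q i / τ i = r), τ i :=
    moment_levels _ _ _ _ hM'
  -- construct the noncatalytic map
  set w : Fin n → ℝ := fun i => q i / τ i with hw
  set u : Fin n → ℝ := fun j => p j / τ j with hu
  set W : ℝ → ℝ := fun r => ∑ i ∈ Finset.univ.filter (fun i => w i = r), τ i with hW
  have hWw : ∀ i, 0 < W (w i) := by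
    intro i
    refine Finset.sum_pos (fun i' _ => hτpos i') ⟨i, Finset.mem_filter.2 ⟨Finset.mem_univ i, rfl⟩⟩
  have hWu : ∀ j, 0 < W (u j) := by
    intro j
    have : W (u j) = ∑ j' ∈ Finset.univ.filter (fun j' => u j' = u j), τ j' := (hlvT (u j)).symm
    rw [this]
    exact Finset.sum_pos (fun j' _ => hτpos j')
      ⟨j, Finset.mem_filter.2 ⟨Finset.mem_univ j, rfl⟩⟩
  have hq_eq : ∀ i, q i = w i * τ i := by
    intro i
    show q i = q i / τ i * τ i
    exact (div_mul_cancel₀ _ (ne_of_gt (hτpos i))).symm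
  have hfiltc : ∀ i, Finset.univ.filter (fun j => w i = u j)
      = Finset.univ.filter (fun j => u j = w i) :=
    fun i => Finset.filter_congr (fun j _ => eq_comm)
  refine ⟨fun i j => if w i = u j then τ i / W (u j) else 0, ?_, ?_, ?_, ?_⟩
  · intro i j
    dsimp only
    split
    · exact div_nonneg (le_of_lt (hτpos i)) (le_of_lt (hWu j))
    · exact le_refl 0
  · intro j
    calc ∑ i, (if w i = u j then τ i / W (u j) else 0)
        = ∑ i ∈ Finset.univ.filter (fun i => w i = u j), τ i / W (u j) :=
          (Finset.sum_filter _ _).symm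
      _ = (∑ i ∈ Finset.univ.filter (fun i => w i = u j), τ i) / W (u j) :=
          (Finset.sum_div _ _ _).symm
      _ = W (u j) / W (u j) := rfl
      _ = 1 := div_self (ne_of_gt (hWu j))
  · intro i
    calc ∑ j, (if w i = u j then τ i / W (u j) else 0) * τ j
        = ∑ j, (if w i = u j then τ i / W (w i) * τ j else 0) := by
          refine Finset.sum_congr rfl (fun j _ => ?_)
          by_cases h : w i = u j
          · rw [if_pos h, if_pos h, ← h]
          · rw [if_neg h, if_neg h, zero_mul]
      _ = ∑ j ∈ Finset.univ.filter (fun j => w i = u j), τ i / W (w i) * τ j :=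
          (Finset.sum_filter _ _).symm
      _ = τ i / W (w i) * ∑ j ∈ Finset.univ.filter (fun j => u j = w i), τ j := by
          rw [hfiltc i, Finset.mul_sum]
      _ = τ i / W (w i) * W (w i) := by rw [hlvT (w i)]
      _ = τ i := div_mul_cancel₀ _ (ne_of_gt (hWw i))
  · intro i
    calc ∑ j, (if w i = u j then τ i / W (u j) else 0) * p j
        = ∑ j, (if w i = u j then τ i / W (w i) * p j else 0) := by
          refine Finset.sum_congr rfl (fun j _ => ?_)
          by_cases h : w i = u j
          · rw [if_pos h, if_pos h, ← h]
          · rw [if_neg h, if_neg h, zero_mul]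
      _ = ∑ j ∈ Finset.univ.filter (fun j => w i = u j), τ i / W (w i) * p j :=
          (Finset.sum_filter _ _).symm
      _ = τ i / W (w i) * ∑ j ∈ Finset.univ.filter (fun j => u j = w i), p j := by
          rw [hfiltc i, Finset.mul_sum]
      _ = τ i / W (w i) * ∑ i' ∈ Finset.univ.filter (fun i' => w i' = w i), q i' := by
          rw [hlvP (w i)]
      _ = τ i / W (w i) * (w i * W (w i)) := by
          congr 1
          rw [hW, Finset.mul_sum]
          refine Finset.sum_congr rfl (fun i' hi' => ?_)
          rw [hq_eq i', (Finset.mem_filter.1 hi').2]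
      _ = q i := by
          rw [show τ i / W (w i) * (w i * W (w i))
              = w i * (τ i / W (w i) * W (w i)) from by ring,
            div_mul_cancel₀ _ (ne_of_gt (hWw i)), ← hq_eq i]
end

section
/- Let E : Fin n → ℝ be energies, β > 0, and τ the associated Gibbs distribution. Let p and q be strictly positive probability vectors on Fin n. Then the following are equivalent: (a) the thermomajorization curves of (p, E) and (q, E) at inverse temperature β coincide, i.e., for every real k > 0, ∑ over {i | p i * Real.exp (β * E i) = k} of p i equals ∑ over {i | q i * Real.exp (β * E i) = k} of q i; (b) for every real α ≠ 1, D_α(p‖τ) = D_α(q‖τ). -/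
open Finset

/-- Rényi α-divergence for strictly positive probability vectors. -/
noncomputable def Dalpha {S : Type*} [Fintype S] (α : ℝ) (p q : S → ℝ) : ℝ :=
  (α - 1)⁻¹ * Real.log (∑ x, p x ^ α * q x ^ (1 - α))


/-- Exponential characters `s ↦ exp (c * s)` as monoid homs. -/
noncomputable def expChar (c : ℝ) : Multiplicative ℝ →* ℝ where
  toFun s := Real.exp (c * Multiplicative.toAdd s)
  map_one' := by simp
  map_mul' x y := by simp [mul_add, Real.exp_add]

lemma expChar_injective : Function.Injective expChar := by
  intro c c' h
  have := congrArg (fun f : Multiplicative ℝ →* ℝ => f (Multiplicative.ofAdd 1)) h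
  simpa [expChar, Real.exp_eq_exp] using this

lemma exp_sum_eq_zero {K : Finset ℝ} (hK : ∀ k ∈ K, 0 < k) (c : ℝ → ℝ)
    (h : ∀ s : ℝ, ∑ k ∈ K, c k * Real.exp (Real.log k * s) = 0) :
    ∀ k ∈ K, c k = 0 := by
  have hinj : Function.Injective (fun k : K => expChar (Real.log (k : ℝ))) := by
    intro x y hxy
    have hlog := expChar_injective hxy
    have := Real.log_injOn_pos (Set.mem_Ioi.2 (hK x x.2)) (Set.mem_Ioi.2 (hK y y.2)) hlog
    exact Subtype.ext this
  have li : LinearIndependent ℝ (fun k : K => ⇑(expChar (Real.log (k : ℝ)))) :=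
    (linearIndependent_monoidHom (Multiplicative ℝ) ℝ).comp _ hinj
  have hz : ∑ i : K, c (i : ℝ) • ⇑(expChar (Real.log (i : ℝ))) = 0 := by
    funext s
    have := h (Multiplicative.toAdd s)
    simpa [Finset.sum_apply, expChar, ← Finset.sum_coe_sort K] using this
  intro k hk
  exact Fintype.linearIndependent_iff.mp li (fun i => c (i : ℝ)) hz ⟨k, hk⟩

lemma group_sum {n : ℕ} (p g : Fin n → ℝ) {K : Finset ℝ} (hg : ∀ i, g i ∈ K) (f : ℝ → ℝ) :
    ∑ i, p i * f (g i) = ∑ k ∈ K, (∑ i ∈ Finset.univ.filter (fun i => g i = k), p i) * f k := by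
  rw [← Finset.sum_fiberwise_of_maps_to (fun i _ => hg i) (fun i => p i * f (g i))]
  refine Finset.sum_congr rfl fun k _ => ?_
  rw [Finset.sum_mul]
  refine Finset.sum_congr rfl fun i hi => ?_
  rw [(Finset.mem_filter.1 hi).2]

lemma dalpha_sum {n : ℕ} (E : Fin n → ℝ) (β : ℝ) (τ : Fin n → ℝ)
    (hτ : ∀ i, τ i = Real.exp (-β * E i) / ∑ j, Real.exp (-β * E j)) (p : Fin n → ℝ)
    (hp0 : ∀ i, 0 < p i) (α : ℝ) (hZ : 0 < ∑ j, Real.exp (-β * E j)) :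
    ∑ x, p x ^ α * τ x ^ (1 - α) =
      (∑ j, Real.exp (-β * E j)) ^ (α - 1) *
        ∑ i, p i * (p i * Real.exp (β * E i)) ^ (α - 1) := by
  set Z := ∑ j, Real.exp (-β * E j) with hZdef
  rw [Finset.mul_sum]
  refine Finset.sum_congr rfl fun x _ => ?_
  rw [hτ x, Real.div_rpow (Real.exp_nonneg _) hZ.le,
    Real.mul_rpow (hp0 x).le (Real.exp_nonneg _),
    ← Real.exp_mul, ← Real.exp_mul]
  have h1 : p x ^ α = p x * p x ^ (α - 1) := by
    nth_rewrite 2 [← Real.rpow_one (p x)]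
    rw [← Real.rpow_add (hp0 x)]
    congr 1; ring
  have h2 : Z ^ (1 - α) = (Z ^ (α - 1))⁻¹ := by
    rw [← Real.rpow_neg hZ.le]; congr 1; ring
  have h3 : -β * E x * (1 - α) = β * E x * (α - 1) := by ring
  rw [h1, h2, h3]
  have hZp : (0:ℝ) < Z ^ (α - 1) := Real.rpow_pos_of_pos hZ _
  field_simp

/-- Theorem 4: coincidence of thermomajorization curves is equivalent to equality of
all α-Rényi divergences relative to the Gibbs state. -/
theorem thermomajorization_coincide_iff_renyi_eq
    {n : ℕ} (E : Fin n → ℝ) (β : ℝ) (hβ : 0 < β)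
    (τ : Fin n → ℝ)
    (hτ : ∀ i, τ i = Real.exp (-β * E i) / ∑ j, Real.exp (-β * E j))
    (p q : Fin n → ℝ)
    (hp0 : ∀ i, 0 < p i) (hp1 : ∑ i, p i = 1)
    (hq0 : ∀ i, 0 < q i) (hq1 : ∑ i, q i = 1) :
    CurvesCoincide β E p q ↔ ∀ α : ℝ, α ≠ 1 → Dalpha α p τ = Dalpha α q τ := by
  classical
  set Z := ∑ j, Real.exp (-β * E j) with hZdef
  have hn : 0 < n := by
    rcases Nat.eq_zero_or_pos n with h | h
    · subst h; simp at hp1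
    · exact h
  have hZ : 0 < Z := Finset.sum_pos (fun j _ => Real.exp_pos _) (by
    simpa using Finset.univ_nonempty_iff.2 (Fin.pos_iff_nonempty.mp hn))
  set g : Fin n → ℝ := fun i => p i * Real.exp (β * E i) with hgdef
  set h : Fin n → ℝ := fun i => q i * Real.exp (β * E i) with hhdef
  have hgpos : ∀ i, 0 < g i := fun i => mul_pos (hp0 i) (Real.exp_pos _)
  have hhpos : ∀ i, 0 < h i := fun i => mul_pos (hq0 i) (Real.exp_pos _)
  set K : Finset ℝ := (Finset.univ.image g) ∪ (Finset.univ.image h) with hKdef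
  have hgK : ∀ i, g i ∈ K := fun i =>
    Finset.mem_union_left _ (Finset.mem_image_of_mem g (Finset.mem_univ i))
  have hhK : ∀ i, h i ∈ K := fun i =>
    Finset.mem_union_right _ (Finset.mem_image_of_mem h (Finset.mem_univ i))
  have hKpos : ∀ k ∈ K, 0 < k := by
    intro k hk
    rcases Finset.mem_union.1 hk with hk | hk <;>
      obtain ⟨i, -, rfl⟩ := Finset.mem_image.1 hk
    · exact hgpos i
    · exact hhpos i
  set a : ℝ → ℝ := fun k => ∑ i ∈ Finset.univ.filter (fun i => g i = k), p i with hadef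
  set b : ℝ → ℝ := fun k => ∑ i ∈ Finset.univ.filter (fun i => h i = k), q i with hbdef
  have hsump : ∀ α : ℝ, ∑ x, p x ^ α * τ x ^ (1 - α) = Z ^ (α - 1) * ∑ i, p i * g i ^ (α - 1) := by
    exact fun α => dalpha_sum E β τ hτ p hp0 α hZ
  have hsumq : ∀ α : ℝ, ∑ x, q x ^ α * τ x ^ (1 - α) = Z ^ (α - 1) * ∑ i, q i * h i ^ (α - 1) := by
    exact fun α => dalpha_sum E β τ hτ q hq0 α hZ
  have hFgroup : ∀ s : ℝ, ∑ i, p i * g i ^ s = ∑ k ∈ K, a k * k ^ s := fun s =>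
    group_sum p g hgK (fun x => x ^ s)
  have hGgroup : ∀ s : ℝ, ∑ i, q i * h i ^ s = ∑ k ∈ K, b k * k ^ s := fun s =>
    group_sum q h hhK (fun x => x ^ s)
  constructor
  · intro hcurve α hα
    have hab : ∀ k ∈ K, a k = b k := fun k hk => hcurve k (hKpos k hk)
    have hFG : ∑ i, p i * g i ^ (α - 1) = ∑ i, q i * h i ^ (α - 1) := by
      rw [hFgroup, hGgroup]
      exact Finset.sum_congr rfl fun k hk => by rw [hab k hk]
    unfold Dalpha
    rw [hsump, hsumq, hFG]
  · intro hren
    -- From Rényi equality, obtain equal weighted power sums for all exponents s.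
    have hFs : ∀ s : ℝ, ∑ i, p i * g i ^ s = ∑ i, q i * h i ^ s := by
      intro s
      rcases eq_or_ne s 0 with rfl | hs
      · simp [hp1, hq1]
      · have hα : s + 1 ≠ 1 := by intro hc; exact hs (by linarith)
        have hd := hren (s + 1) hα
        unfold Dalpha at hd
        have hs1 : s + 1 - 1 = s := by ring
        rw [hsump, hsumq, hs1] at hd
        have hlog := mul_left_cancel₀ (inv_ne_zero hs) hd
        have hFpos : 0 < ∑ i, p i * g i ^ s :=
          Finset.sum_pos (fun i _ => mul_pos (hp0 i) (Real.rpow_pos_of_pos (hgpos i) _))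
            (by simpa using Finset.univ_nonempty_iff.2 (Fin.pos_iff_nonempty.mp hn))
        have hGpos : 0 < ∑ i, q i * h i ^ s :=
          Finset.sum_pos (fun i _ => mul_pos (hq0 i) (Real.rpow_pos_of_pos (hhpos i) _))
            (by simpa using Finset.univ_nonempty_iff.2 (Fin.pos_iff_nonempty.mp hn))
        have hZp : (0:ℝ) < Z ^ s := Real.rpow_pos_of_pos hZ _
        have := Real.log_injOn_pos
          (Set.mem_Ioi.2 (mul_pos hZp hFpos)) (Set.mem_Ioi.2 (mul_pos hZp hGpos)) hlog
        exact mul_left_cancel₀ hZp.ne' this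
    -- Translate to coefficient equality via linear independence of exponentials.
    have hzero : ∀ s : ℝ, ∑ k ∈ K, (a k - b k) * Real.exp (Real.log k * s) = 0 := by
      intro s
      have h1 := hFs s
      rw [hFgroup, hGgroup] at h1
      have : ∑ k ∈ K, (a k - b k) * k ^ s = 0 := by
        rw [Finset.sum_congr rfl (fun k _ => sub_mul (a k) (b k) (k ^ s)),
          Finset.sum_sub_distrib, h1, sub_self]
      rw [← this]
      refine Finset.sum_congr rfl fun k hk => ?_
      rw [Real.rpow_def_of_pos (hKpos k hk)]
    have hab : ∀ k ∈ K, a k - b k = 0 := exp_sum_eq_zero hKpos _ hzero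
    intro k hk
    by_cases hkK : k ∈ K
    · have := hab k hkK
      have : a k = b k := by linarith [hab k hkK]
      exact this
    · have h1 : Finset.univ.filter (fun i => g i = k) = ∅ := by
        rw [Finset.filter_eq_empty_iff]
        intro i _ hik
        exact hkK (hik ▸ hgK i)
      have h2 : Finset.univ.filter (fun i => h i = k) = ∅ := by
        rw [Finset.filter_eq_empty_iff]
        intro i _ hik
        exact hkK (hik ▸ hhK i)
      rw [h1, h2]
      simp
end

section
/- Let p be a probability vector on Fin n with energies E : Fin n → ℝ, β > 0, and τ the associated Gibbs distribution with partition function Z = ∑ j, Real.exp (−β * E j). Let W₀, W₁ ∈ ℝ and consider the joint system Fin n × Fin 2 with energies (i, w) ↦ E i + (if w = 0 then W₀ else W₁) and associated joint Gibbs distribution τ_SW. If there exists a stochastic matrix G on Fin n × Fin 2 with G · τ_SW = τ_SW and G · (p ⊗ δ₀) = τ ⊗ δ₁ (where δ₀, δ₁ are the point distributions on Fin 2), then β * (W₁ − W₀) ≤ −Real.log (∑ i in {i | p i ≠ 0}, τ i), i.e., the deterministic extracted work is at most β⁻¹ * D₀(p‖τ). -/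
open Finset

/-- Monotonicity of the support overlap under a stochastic map with stationary
distribution `t`. -/
lemma support_sum_mono_aux {α : Type*} [Fintype α]
    (G : α → α → ℝ) (t u v : α → ℝ)
    (hGnn : ∀ y z, 0 ≤ G y z) (hGcol : ∀ z, ∑ y, G y z = 1)
    (htnn : ∀ z, 0 ≤ t z)
    (hstat : ∀ y, ∑ z, G y z * t z = t y)
    (hunn : ∀ z, 0 ≤ u z)
    (hmap : ∀ y, ∑ z, G y z * u z = v y) :
    ∑ z ∈ univ.filter (fun z => u z ≠ 0), t z ≤
    ∑ y ∈ univ.filter (fun y => v y ≠ 0), t y := by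
  classical
  set S := univ.filter (fun z => u z ≠ 0) with hS
  set T := univ.filter (fun y => v y ≠ 0) with hT
  have hzero : ∀ z ∈ S, ∀ y, y ∉ T → G y z = 0 := by
    intro z hz y hy
    simp only [hS, hT, mem_filter, mem_univ, true_and, not_not] at hz hy
    have h0 : ∑ z', G y z' * u z' = 0 := by rw [hmap y, hy]
    have := (Finset.sum_eq_zero_iff_of_nonneg
      (fun z' _ => mul_nonneg (hGnn y z') (hunn z'))).mp h0 z (mem_univ z)
    rcases mul_eq_zero.mp this with h | h
    · exact h
    · exact absurd h hz
  calc ∑ z ∈ S, t z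
      = ∑ z ∈ S, ∑ y, G y z * t z := by
        refine sum_congr rfl fun z _ => ?_
        rw [← Finset.sum_mul, hGcol, one_mul]
    _ = ∑ z ∈ S, ∑ y ∈ T, G y z * t z := by
        refine sum_congr rfl fun z hz => ?_
        symm
        apply Finset.sum_subset (subset_univ T)
        intro y _ hy
        rw [hzero z hz y hy, zero_mul]
    _ = ∑ y ∈ T, ∑ z ∈ S, G y z * t z := Finset.sum_comm
    _ ≤ ∑ y ∈ T, ∑ z, G y z * t z := by
        refine Finset.sum_le_sum fun y _ => ?_
        apply Finset.sum_le_sum_of_subset_of_nonneg (subset_univ S)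
        intro z _ _
        exact mul_nonneg (hGnn y z) (htnn z)
    _ = ∑ y ∈ T, t y := sum_congr rfl fun y _ => hstat y

set_option maxHeartbeats 1000000

/-- Single-shot deterministic work extraction bound `W ≤ k_B T D₀(p‖τ)` for a
two-level work reservoir. -/
theorem deterministic_work_extraction_bound
    {n : ℕ} (p : Fin n → ℝ) (hp0 : ∀ i, 0 ≤ p i) (hp1 : ∑ i, p i = 1)
    (E : Fin n → ℝ) (β : ℝ) (hβ : 0 < β)
    (τ : Fin n → ℝ)
    (hτ : ∀ i, τ i = Real.exp (-β * E i) / ∑ j, Real.exp (-β * E j))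
    (W₀ W₁ : ℝ)
    (F : Fin n × Fin 2 → ℝ)
    (hF : ∀ y, F y = E y.1 + (if y.2 = 0 then W₀ else W₁))
    (τSW : Fin n × Fin 2 → ℝ)
    (hτSW : ∀ y, τSW y = Real.exp (-β * F y) / ∑ z, Real.exp (-β * F z))
    (δ₀ δ₁ : Fin 2 → ℝ)
    (hδ₀ : ∀ w, δ₀ w = if w = 0 then 1 else 0)
    (hδ₁ : ∀ w, δ₁ w = if w = 1 then 1 else 0)
    (hG : ∃ G : (Fin n × Fin 2) → (Fin n × Fin 2) → ℝ,
      (∀ y z, 0 ≤ G y z) ∧ (∀ z, ∑ y, G y z = 1) ∧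
      (∀ y, ∑ z, G y z * τSW z = τSW y) ∧
      (∀ y, ∑ z, G y z * (p z.1 * δ₀ z.2) = τ y.1 * δ₁ y.2)) :
    β * (W₁ - W₀) ≤ -Real.log (∑ i ∈ Finset.univ.filter (fun i => p i ≠ 0), τ i) := by
  classical
  obtain ⟨G, hGnn, hGcol, hGstat, hGmap⟩ := hG
  have hn : n ≠ 0 := by rintro rfl; simp at hp1
  haveI : NeZero n := ⟨hn⟩
  set A : ℝ := ∑ j, Real.exp (-β * E j) with hA
  have hApos : 0 < A := Finset.sum_pos (fun j _ => Real.exp_pos _) univ_nonempty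
  set B : ℝ := ∑ z : Fin n × Fin 2, Real.exp (-β * F z) with hB
  have hBpos : 0 < B := Finset.sum_pos (fun j _ => Real.exp_pos _) univ_nonempty
  have hτpos : ∀ i, 0 < τ i := fun i => by
    rw [hτ i]; exact div_pos (Real.exp_pos _) hApos
  have hτSWnn : ∀ y, 0 ≤ τSW y := fun y => by
    rw [hτSW y]; exact le_of_lt (div_pos (Real.exp_pos _) hBpos)
  have hτSW0 : ∀ i : Fin n, τSW (i, 0) = Real.exp (-β * E i) * Real.exp (-β * W₀) / B := by
    intro i
    have hFi : F (i, 0) = E i + W₀ := by rw [hF]; norm_num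
    rw [hτSW, hFi, mul_add, Real.exp_add]
  have hτSW1 : ∀ i : Fin n, τSW (i, 1) = Real.exp (-β * E i) * Real.exp (-β * W₁) / B := by
    intro i
    have hFi : F (i, 1) = E i + W₁ := by
      rw [hF]; norm_num
    rw [hτSW, hFi, mul_add, Real.exp_add]
  set Sp : ℝ := ∑ i ∈ Finset.univ.filter (fun i => p i ≠ 0), τ i with hSp
  -- the key inequality
  have key := support_sum_mono_aux G τSW (fun z => p z.1 * δ₀ z.2)
      (fun y => τ y.1 * δ₁ y.2) hGnn hGcol hτSWnn hGstat
      (fun z => mul_nonneg (hp0 _) (by rw [hδ₀]; split <;> norm_num)) hGmap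
  -- compute LHS of key
  have hL : ∑ z ∈ univ.filter (fun z => p z.1 * δ₀ z.2 ≠ 0), τSW z
      = Real.exp (-β * W₀) * A / B * Sp := by
    rw [Finset.sum_filter, Fintype.sum_prod_type]
    have hstep : ∀ i : Fin n,
        (∑ w : Fin 2, if p (i, w).1 * δ₀ (i, w).2 ≠ 0 then τSW (i, w) else 0)
        = if p i ≠ 0 then τSW (i, 0) else 0 := by
      intro i
      rw [Fin.sum_univ_two]
      simp [hδ₀]
    rw [Finset.sum_congr rfl fun i _ => hstep i]
    rw [hSp, Finset.sum_filter, Finset.mul_sum]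
    refine Finset.sum_congr rfl fun i _ => ?_
    by_cases h : p i ≠ 0
    · rw [if_pos h, if_pos h, hτSW0, hτ]
      rw [div_mul_div_comm]
      rw [mul_right_comm]
      rw [mul_div_mul_right _ _ hApos.ne']
      rw [mul_comm]
    · rw [if_neg h, if_neg h, mul_zero]
  -- compute RHS of key
  have hR : ∑ y ∈ univ.filter (fun y => τ y.1 * δ₁ y.2 ≠ 0), τSW y
      = Real.exp (-β * W₁) * A / B := by
    rw [Finset.sum_filter, Fintype.sum_prod_type]
    have hstep : ∀ i : Fin n,
        (∑ w : Fin 2, if τ (i, w).1 * δ₁ (i, w).2 ≠ 0 then τSW (i, w) else 0)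
        = τSW (i, 1) := by
      intro i
      rw [Fin.sum_univ_two]
      simp [hδ₁, (hτpos i).ne']
    rw [Finset.sum_congr rfl fun i _ => hstep i]
    simp only [hτSW1]
    rw [← Finset.sum_div, ← Finset.sum_mul, ← hA]
    ring
  rw [hL, hR] at key
  -- Sp is positive
  have hSppos : 0 < Sp := by
    obtain ⟨i, hi⟩ : ∃ i, p i ≠ 0 := by
      by_contra h
      push_neg at h
      rw [Finset.sum_congr rfl fun i _ => h i] at hp1
      simp at hp1
    refine Finset.sum_pos' (fun j _ => (hτpos j).le) ⟨i, ?_, hτpos i⟩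
    simp [Finset.mem_filter, hi]
  -- from key: exp(-βW₀) * Sp ≤ exp(-βW₁)
  have h2 : Real.exp (-β * W₀) * Sp ≤ Real.exp (-β * W₁) := by
    have hAB : (0:ℝ) < A / B := div_pos hApos hBpos
    have h3 : Real.exp (-β * W₀) * Sp * (A / B) ≤ Real.exp (-β * W₁) * (A / B) := by
      calc Real.exp (-β * W₀) * Sp * (A / B)
          = Real.exp (-β * W₀) * A / B * Sp := by ring
        _ ≤ Real.exp (-β * W₁) * A / B := key
        _ = Real.exp (-β * W₁) * (A / B) := by ring
    exact le_of_mul_le_mul_right h3 hAB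
  have h3 := Real.log_le_log (by positivity) h2
  rw [Real.log_mul (Real.exp_ne_zero _) hSppos.ne', Real.log_exp, Real.log_exp] at h3
  linarith
end

section
/- Let p be a probability vector on Fin n with energies E : Fin n → ℝ, β > 0, and τ the associated (strictly positive) Gibbs distribution. Let W₀, W₁ ∈ ℝ and consider the joint system Fin n × Fin 2 with energies (i, w) ↦ E i + (if w = 0 then W₀ else W₁) and associated joint Gibbs distribution τ_SW. If there exists a stochastic matrix G on Fin n × Fin 2 with G · τ_SW = τ_SW and G · (τ ⊗ δ₁) = p ⊗ δ₀, then β * (W₁ − W₀) ≥ Real.log (max over i of p i / τ i), i.e., the deterministic work of formation is at least β⁻¹ * D_∞(p‖τ). -/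
open Finset

/-- Single-shot deterministic work-of-formation bound `W ≥ k_B T D_∞(p‖τ)` for a
two-level work reservoir. -/
theorem deterministic_work_of_formation_bound
    {n : ℕ} (hn : 0 < n)
    (p : Fin n → ℝ) (hp0 : ∀ i, 0 ≤ p i) (hp1 : ∑ i, p i = 1)
    (E : Fin n → ℝ) (β : ℝ) (hβ : 0 < β)
    (τ : Fin n → ℝ)
    (hτ : ∀ i, τ i = Real.exp (-β * E i) / ∑ j, Real.exp (-β * E j))
    (hτpos : ∀ i, 0 < τ i)
    (W₀ W₁ : ℝ)
    (F : Fin n × Fin 2 → ℝ)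
    (hF : ∀ y, F y = E y.1 + (if y.2 = 0 then W₀ else W₁))
    (τSW : Fin n × Fin 2 → ℝ)
    (hτSW : ∀ y, τSW y = Real.exp (-β * F y) / ∑ z, Real.exp (-β * F z))
    (δ₀ δ₁ : Fin 2 → ℝ)
    (hδ₀ : ∀ w, δ₀ w = if w = 0 then 1 else 0)
    (hδ₁ : ∀ w, δ₁ w = if w = 1 then 1 else 0)
    (hG : ∃ G : (Fin n × Fin 2) → (Fin n × Fin 2) → ℝ,
      (∀ y z, 0 ≤ G y z) ∧ (∀ z, ∑ y, G y z = 1) ∧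
      (∀ y, ∑ z, G y z * τSW z = τSW y) ∧
      (∀ y, ∑ z, G y z * (τ z.1 * δ₁ z.2) = p y.1 * δ₀ y.2)) :
    β * (W₁ - W₀) ≥
      Real.log (Finset.univ.sup'
        (Finset.univ_nonempty_iff.mpr ⟨⟨0, hn⟩⟩) (fun i => p i / τ i)) := by
  obtain ⟨G, hGnn, hGcol, hGfix, hGmap⟩ := hG
  have hne : (Finset.univ : Finset (Fin n)).Nonempty := ⟨⟨0, hn⟩, mem_univ _⟩
  have hZpos : 0 < ∑ j, Real.exp (-β * E j) :=
    Finset.sum_pos (fun j _ => Real.exp_pos _) hne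
  have hZSWpos : 0 < ∑ z, Real.exp (-β * F z) :=
    Finset.sum_pos (fun z _ => Real.exp_pos _) ⟨(⟨0, hn⟩, 0), mem_univ _⟩
  set Z : ℝ := ∑ j, Real.exp (-β * E j) with hZ
  set ZSW : ℝ := ∑ z, Real.exp (-β * F z) with hZSW
  have hτSWpos : ∀ z, 0 < τSW z := fun z => by
    rw [hτSW]; exact div_pos (Real.exp_pos _) hZSWpos
  set c : ℝ := Z / ZSW with hc
  have hcpos : 0 < c := div_pos hZpos hZSWpos
  have hτ1 : ∀ j : Fin n, τSW (j, 1) = Real.exp (-β * W₁) * c * τ j := by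
    intro j
    have hFj : F (j, 1) = E j + W₁ := by rw [hF]; norm_num
    rw [hτSW, hFj, hτ j, hc,
      show -β * (E j + W₁) = -β * E j + -β * W₁ by ring, Real.exp_add]
    field_simp
  have hτ0 : ∀ i : Fin n, τSW (i, 0) = Real.exp (-β * W₀) * c * τ i := by
    intro i
    have hFi : F (i, 0) = E i + W₀ := by rw [hF]; norm_num
    rw [hτSW, hFi, hτ i, hc,
      show -β * (E i + W₀) = -β * E i + -β * W₀ by ring, Real.exp_add]
    field_simp
  have key : ∀ i : Fin n, p i * Real.exp (-β * W₁) ≤ τ i * Real.exp (-β * W₀) := by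
    intro i
    have hA : ∑ j, G (i, 0) (j, 1) * τ j = p i := by
      have h := hGmap (i, 0)
      rw [Fintype.sum_prod_type] at h
      simp only [Fin.sum_univ_two, hδ₁, hδ₀] at h
      norm_num at h
      simpa using h
    have hB : ∑ j, G (i, (0 : Fin 2)) (j, 1) * τSW (j, 1) ≤ τSW (i, 0) := by
      have h := hGfix (i, 0)
      rw [Fintype.sum_prod_type] at h
      calc ∑ j, G (i, (0 : Fin 2)) (j, 1) * τSW (j, 1)
          ≤ ∑ j, ∑ b, G (i, 0) (j, b) * τSW (j, b) := by
            apply Finset.sum_le_sum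
            intro j _
            rw [Fin.sum_univ_two]
            have := mul_nonneg (hGnn (i, 0) (j, 0)) (hτSWpos (j, 0)).le
            linarith
        _ = τSW (i, 0) := h
    have hBC : Real.exp (-β * W₁) * c * p i ≤ Real.exp (-β * W₀) * c * τ i := by
      have : ∑ j, G (i, (0 : Fin 2)) (j, 1) * τSW (j, 1)
          = Real.exp (-β * W₁) * c * p i := by
        rw [← hA, Finset.mul_sum]
        apply Finset.sum_congr rfl
        intro j _
        rw [hτ1 j]
        ring
      rw [this, hτ0 i] at hB
      exact hB
    nlinarith [hBC, hcpos]
  have hratio : ∀ i : Fin n, p i / τ i ≤ Real.exp (β * (W₁ - W₀)) := by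
    intro i
    rw [div_le_iff₀ (hτpos i)]
    have hexp : Real.exp (β * (W₁ - W₀))
        = Real.exp (-β * W₀) / Real.exp (-β * W₁) := by
      rw [← Real.exp_sub]; ring_nf
    rw [hexp]
    rw [div_mul_eq_mul_div, le_div_iff₀ (Real.exp_pos _)]
    nlinarith [key i]
  have hsup_le : (Finset.univ.sup'
      (Finset.univ_nonempty_iff.mpr ⟨⟨0, hn⟩⟩) (fun i => p i / τ i))
      ≤ Real.exp (β * (W₁ - W₀)) :=
    Finset.sup'_le _ _ fun i _ => hratio i
  have hipos : ∃ i, 0 < p i := by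
    by_contra h
    push_neg at h
    have : ∑ i, p i ≤ 0 := Finset.sum_nonpos fun i _ => h i
    linarith
  obtain ⟨i₀, hi₀⟩ := hipos
  have hsup_pos : 0 < (Finset.univ.sup'
      (Finset.univ_nonempty_iff.mpr ⟨⟨0, hn⟩⟩) (fun i => p i / τ i)) :=
    lt_of_lt_of_le (div_pos hi₀ (hτpos i₀))
      (Finset.le_sup' (fun i => p i / τ i) (mem_univ i₀))
  have := Real.log_le_log hsup_pos hsup_le
  rw [Real.log_exp] at this
  exact this
end

section
/- Let p be a probability vector on Fin n with energies E : Fin n → ℝ, β > 0, and τ the associated Gibbs distribution, and let m be the number of distinct positive slopes of the thermomajorization curve of (p, E), i.e., m is the cardinality of the finite set {p i * Real.exp (β * E i) | i ∈ Fin n, p i > 0}. Let d ≥ 1, let r be a probability vector on Fin d, and let ε, ε' : Fin d → ℝ; set the reservoir state space to Fin d ⊕ Fin d with energies η = Sum.elim ε ε', initial reservoir distribution w = Sum.elim r 0 and final reservoir distribution w' = Sum.elim 0 r. If the thermomajorization curves at inverse temperature β of the joint configurations (p ⊗ w) and (τ ⊗ w') over the joint energies (i, x) ↦ E i + η x coincide,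 then d ≥ m. -/
open Finset

/-- Lower bound on the dimension of an efficient work-extraction reservoir:
if a `2d`-level reservoir achieves zero entropy production for extraction from `p`,
then `d` is at least the number `m` of distinct slopes of `p`'s thermomajorization
curve. -/
theorem efficient_extraction_reservoir_dimension_lower_bound
    {n : ℕ} (p : Fin n → ℝ) (hp0 : ∀ i, 0 ≤ p i) (hp1 : ∑ i, p i = 1)
    (E : Fin n → ℝ) (β : ℝ) (hβ : 0 < β)
    (τ : Fin n → ℝ)
    (hτ : ∀ i, τ i = Real.exp (-β * E i) / ∑ j, Real.exp (-β * E j))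
    (m : ℕ)
    (hm : m = ((Finset.univ.filter (fun i => 0 < p i)).image
      (fun i => p i * Real.exp (β * E i))).card)
    (d : ℕ) (hd : 1 ≤ d)
    (r : Fin d → ℝ) (hr0 : ∀ j, 0 ≤ r j) (hr1 : ∑ j, r j = 1)
    (ε ε' : Fin d → ℝ)
    (hcoincide : CurvesCoincide β
      (fun y : Fin n × (Fin d ⊕ Fin d) => E y.1 + Sum.elim ε ε' y.2)
      (fun y : Fin n × (Fin d ⊕ Fin d) => p y.1 * Sum.elim r (0 : Fin d → ℝ) y.2)
      (fun y : Fin n × (Fin d ⊕ Fin d) => τ y.1 * Sum.elim (0 : Fin d → ℝ) r y.2)) :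
    m ≤ d := by
  classical
  set Z : ℝ := ∑ j, Real.exp (-β * E j) with hZ
  -- choose j₀ with r j₀ > 0
  have hj0 : ∃ j, 0 < r j := by
    by_contra h
    push_neg at h
    have : (∑ j, r j) ≤ 0 := Finset.sum_nonpos (fun j _ => h j)
    rw [hr1] at this; linarith
  obtain ⟨j₀, hj₀⟩ := hj0
  set c : ℝ := r j₀ * Real.exp (β * ε j₀) with hc
  have hcpos : 0 < c := mul_pos hj₀ (Real.exp_pos _)
  set S := (Finset.univ.filter (fun i => 0 < p i)).image
      (fun i => p i * Real.exp (β * E i)) with hS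
  set T : Finset ℝ := Finset.univ.image (fun j : Fin d => r j * Real.exp (β * ε' j) / Z)
    with hT
  have hsub : S.image (fun s => s * c) ⊆ T := by
    intro k hk
    simp only [hS, Finset.mem_image, Finset.mem_filter, Finset.mem_univ, true_and] at hk
    obtain ⟨s, ⟨i, hpi, hs⟩, hks⟩ := hk
    have hkpos : 0 < k := by
      rw [← hks, ← hs]
      exact mul_pos (mul_pos hpi (Real.exp_pos _)) hcpos
    have h1 := hcoincide k hkpos
    -- the initial-state sum at slope k is positive
    have hamem : ((i, Sum.inl j₀) : Fin n × (Fin d ⊕ Fin d)) ∈ Finset.univ.filter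
        (fun y : Fin n × (Fin d ⊕ Fin d) =>
          (p y.1 * Sum.elim r (0 : Fin d → ℝ) y.2) *
            Real.exp (β * (E y.1 + Sum.elim ε ε' y.2)) = k) := by
      simp only [Finset.mem_filter, Finset.mem_univ, true_and, Sum.elim_inl]
      rw [← hks, ← hs, hc, mul_add, Real.exp_add]
      ring
    have hanonneg : ∀ y ∈ Finset.univ.filter
        (fun y : Fin n × (Fin d ⊕ Fin d) =>
          (p y.1 * Sum.elim r (0 : Fin d → ℝ) y.2) *
            Real.exp (β * (E y.1 + Sum.elim ε ε' y.2)) = k),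
        (0:ℝ) ≤ p y.1 * Sum.elim r (0 : Fin d → ℝ) y.2 := by
      rintro ⟨i', x⟩ _
      cases x with
      | inl j' => exact mul_nonneg (hp0 i') (hr0 j')
      | inr j' => simp
    have hapos : 0 < ∑ y ∈ Finset.univ.filter
        (fun y : Fin n × (Fin d ⊕ Fin d) =>
          (p y.1 * Sum.elim r (0 : Fin d → ℝ) y.2) *
            Real.exp (β * (E y.1 + Sum.elim ε ε' y.2)) = k),
        p y.1 * Sum.elim r (0 : Fin d → ℝ) y.2 := by
      have hle := Finset.single_le_sum hanonneg hamem
      simp only [Sum.elim_inl] at hle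
      have : 0 < p i * r j₀ := mul_pos hpi hj₀
      linarith
    rw [h1] at hapos
    -- so some final-state term is positive
    have hbex : ∃ y ∈ Finset.univ.filter
        (fun y : Fin n × (Fin d ⊕ Fin d) =>
          (τ y.1 * Sum.elim (0 : Fin d → ℝ) r y.2) *
            Real.exp (β * (E y.1 + Sum.elim ε ε' y.2)) = k),
        0 < τ y.1 * Sum.elim (0 : Fin d → ℝ) r y.2 := by
      by_contra h
      push_neg at h
      have := Finset.sum_nonpos h
      linarith
    obtain ⟨⟨i', x⟩, hymem, hbpos⟩ := hbex
    cases x with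
    | inl j' => simp at hbpos
    | inr j' =>
      simp only [Finset.mem_filter, Finset.mem_univ, true_and, Sum.elim_inr] at hymem hbpos
      have hZpos : 0 < Z := Finset.sum_pos (fun j _ => Real.exp_pos _)
        ⟨i', Finset.mem_univ i'⟩
      have hk' : r j' * Real.exp (β * ε' j') / Z = k := by
        rw [← hymem, hτ, mul_add, Real.exp_add, neg_mul, Real.exp_neg]
        field_simp
      rw [hT]
      exact Finset.mem_image.2 ⟨j', Finset.mem_univ j', hk'⟩
  have hinj : Function.Injective (fun s : ℝ => s * c) :=
    fun a b h => by
      have : a * c = b * c := h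
      exact mul_right_cancel₀ hcpos.ne' this
  calc m = (S.image (fun s => s * c)).card := by
        rw [hm, Finset.card_image_of_injective S hinj]
    _ ≤ T.card := Finset.card_le_card hsub
    _ ≤ (Finset.univ : Finset (Fin d)).card := Finset.card_image_le
    _ = d := by simp
end

section
/- Let p be a probability vector on Fin n with energies E : Fin n → ℝ, β > 0, and τ the associated Gibbs distribution, and let m be the number of distinct positive slopes of the thermomajorization curve of (p, E), i.e., the cardinality of {p i * Real.exp (β * E i) | i ∈ Fin n, p i > 0}. Then there exist a strictly positive probability vector r on Fin m and energies ε, ε' : Fin m → ℝ such that, with reservoir state space Fin m ⊕ Fin m, energies η = Sum.elim ε ε', initial reservoir distribution w = Sum.elim r 0 and final reservoir distribution w' = Sum.elim 0 r, the thermomajorization curves at inverse temperature β of (p ⊗ w) and (τ ⊗ w') over the joint energies (i, x) ↦ E i + η x coincide, and the extracted work satisfies ∑ i, r i * (ε' i − ε i) = β⁻¹ * D₁(p‖τ). -/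
open Finset

/-- Construction of the minimal-dimension (`2m`-level) efficient work reservoir for
work extraction, achieving the nonequilibrium free energy `β⁻¹ D₁(p‖τ)`. -/
theorem minimal_efficient_extraction_reservoir_exists
    {n : ℕ} (p : Fin n → ℝ) (hp0 : ∀ i, 0 ≤ p i) (hp1 : ∑ i, p i = 1)
    (E : Fin n → ℝ) (β : ℝ) (hβ : 0 < β)
    (τ : Fin n → ℝ)
    (hτ : ∀ i, τ i = Real.exp (-β * E i) / ∑ j, Real.exp (-β * E j))
    (m : ℕ)
    (hm : m = ((Finset.univ.filter (fun i => 0 < p i)).image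
      (fun i => p i * Real.exp (β * E i))).card) :
    ∃ (r : Fin m → ℝ) (ε ε' : Fin m → ℝ),
      (∀ j, 0 < r j) ∧ (∑ j, r j = 1) ∧
      CurvesCoincide β
        (fun y : Fin n × (Fin m ⊕ Fin m) => E y.1 + Sum.elim ε ε' y.2)
        (fun y : Fin n × (Fin m ⊕ Fin m) => p y.1 * Sum.elim r (0 : Fin m → ℝ) y.2)
        (fun y : Fin n × (Fin m ⊕ Fin m) => τ y.1 * Sum.elim (0 : Fin m → ℝ) r y.2) ∧
      ∑ i, r i * (ε' i - ε i) = β⁻¹ * D1 p τ := by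
  classical
  set s : Finset ℝ := (Finset.univ.filter (fun i => 0 < p i)).image
      (fun i => p i * Real.exp (β * E i)) with hs
  set Z : ℝ := ∑ j, Real.exp (-β * E j) with hZdef
  have hn : (Finset.univ : Finset (Fin n)).Nonempty := by
    by_contra h
    rw [Finset.not_nonempty_iff_eq_empty] at h
    rw [h, Finset.sum_empty] at hp1
    norm_num at hp1
  have hZ : 0 < Z := Finset.sum_pos (fun i _ => Real.exp_pos _) hn
  set e := s.orderIsoOfFin hm.symm with he
  set c : Fin m → ℝ := fun j => (e j : ℝ) with hc
  have hc_mem : ∀ j, c j ∈ s := fun j => (e j).2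
  set R : ℝ → ℝ := fun b => ∑ i ∈ Finset.univ.filter
      (fun i => 0 < p i ∧ p i * Real.exp (β * E i) = b), p i with hR
  set r : Fin m → ℝ := fun j => R (c j) with hrdef
  have hwit : ∀ j, ∃ i, 0 < p i ∧ p i * Real.exp (β * E i) = c j := by
    intro j
    have h := hc_mem j
    rw [hs, Finset.mem_image] at h
    obtain ⟨i, hi, hi2⟩ := h
    exact ⟨i, (Finset.mem_filter.mp hi).2, hi2⟩
  have hr_pos : ∀ j, 0 < r j := by
    intro j
    obtain ⟨i, hpi, hslope⟩ := hwit j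
    refine Finset.sum_pos' (fun i _ => hp0 i) ⟨i, ?_, hpi⟩
    simp [hpi, hslope]
  have hc_pos : ∀ j, 0 < c j := by
    intro j
    obtain ⟨i, hpi, hslope⟩ := hwit j
    rw [← hslope]; positivity
  have h2 : ∀ F : ℝ → ℝ, ∑ j, F (c j) = ∑ b ∈ s, F b := by
    intro F
    rw [← Finset.sum_coe_sort s F]
    exact Equiv.sum_comp e.toEquiv (fun x => F (x : ℝ))
  -- key fiberwise identity
  have key : ∀ g : ℝ → ℝ,
      ∑ j, r j * g (c j)
        = ∑ i ∈ Finset.univ.filter (fun i => 0 < p i),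
            p i * g (p i * Real.exp (β * E i)) := by
    intro g
    have step1 : ∑ j, r j * g (c j) = ∑ b ∈ s, R b * g b :=
      h2 (fun b => R b * g b)
    rw [step1]
    have step2 : ∀ b ∈ s, R b * g b = ∑ i ∈ Finset.univ.filter
        (fun i => 0 < p i ∧ p i * Real.exp (β * E i) = b),
        p i * g (p i * Real.exp (β * E i)) := by
      intro b _
      rw [hR]
      rw [Finset.sum_mul]
      apply Finset.sum_congr rfl
      intro i hi
      rw [Finset.mem_filter] at hi
      rw [hi.2.2]
    rw [Finset.sum_congr rfl step2]
    simp only [← Finset.filter_filter]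
    exact Finset.sum_fiberwise_of_maps_to (fun i hi => by
      rw [hs, Finset.mem_image]; exact ⟨i, hi, rfl⟩) _
  have hposfilter : ∑ i ∈ Finset.univ.filter (fun i => 0 < p i), p i = 1 := by
    rw [← hp1]
    apply Finset.sum_filter_of_ne
    intro i _ hne
    exact lt_of_le_of_ne (hp0 i) (Ne.symm hne)
  have hr_sum : ∑ j, r j = 1 := by
    have := key (fun _ => 1)
    simpa [hposfilter] using this
  clear_value r R c e Z s
  -- energies
  refine ⟨r, fun j => -(β⁻¹ * Real.log (r j)), fun j => β⁻¹ * Real.log (Z * c j / r j),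
    hr_pos, hr_sum, ?_, ?_⟩
  · -- curves coincide
    intro k hk
    have hexp1 : ∀ (i : Fin n) (j : Fin m),
        p i * r j * Real.exp (β * (E i + -(β⁻¹ * Real.log (r j))))
          = p i * Real.exp (β * E i) := by
      intro i j
      have hb : β * (E i + -(β⁻¹ * Real.log (r j))) = β * E i + -Real.log (r j) := by
        rw [mul_add, mul_neg, ← mul_assoc, mul_inv_cancel₀ hβ.ne', one_mul]
      rw [hb, Real.exp_add, Real.exp_neg, Real.exp_log (hr_pos j)]
      field_simp [(hr_pos j).ne']
    have hexp2 : ∀ (i : Fin n) (j : Fin m),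
        τ i * r j * Real.exp (β * (E i + β⁻¹ * Real.log (Z * c j / r j))) = c j := by
      intro i j
      have hb : β * (E i + β⁻¹ * Real.log (Z * c j / r j))
          = β * E i + Real.log (Z * c j / r j) := by
        rw [mul_add, ← mul_assoc, mul_inv_cancel₀ hβ.ne', one_mul]
      have h3 : (0:ℝ) < Z * c j / r j := by
        have h4 := hc_pos j; have h5 := hr_pos j; positivity
      rw [hb, Real.exp_add, Real.exp_log h3, hτ i, neg_mul, Real.exp_neg]
      field_simp [(hr_pos j).ne', hZ.ne', (Real.exp_pos (β * E i)).ne']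
    have hτsum : ∑ i, τ i = 1 := by
      rw [Finset.sum_congr rfl (fun i _ => hτ i), ← Finset.sum_div, ← hZdef, div_self hZ.ne']
    rw [Finset.sum_filter, Finset.sum_filter, Fintype.sum_prod_type,
      Fintype.sum_prod_type]
    simp only [Fintype.sum_sum_type, Sum.elim_inl, Sum.elim_inr, Pi.zero_apply,
      mul_zero, zero_mul, ite_self]
    simp only [hexp1, hexp2, Finset.sum_const_zero, add_zero, zero_add]
    have hL : ∀ i : Fin n, (∑ j, if p i * Real.exp (β * E i) = k then p i * r j else 0)
        = if p i * Real.exp (β * E i) = k then p i else 0 := by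
      intro i
      split
      · rw [← Finset.mul_sum, hr_sum, mul_one]
      · simp
    have hRside : (∑ i, ∑ j, if c j = k then τ i * r j else 0)
        = ∑ j, if c j = k then r j else 0 := by
      rw [Finset.sum_comm]
      apply Finset.sum_congr rfl
      intro j _
      split
      · rw [← Finset.sum_mul, hτsum, one_mul]
      · simp
    rw [hRside]
    simp only [hL]
    -- now: ∑ i, if slope i = k then p i else 0 = ∑ j, if c j = k then r j else 0
    have hLside : (∑ i, if p i * Real.exp (β * E i) = k then p i else 0) = R k := by
      simp only [hR]
      rw [Finset.sum_filter]
      apply Finset.sum_congr rfl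
      intro i _
      by_cases hpi : 0 < p i
      · simp [hpi]
      · have hpz : p i = 0 := le_antisymm (not_lt.mp hpi) (hp0 i)
        simp [hpz, hk.ne]
    rw [hLside]
    have hRside2 : (∑ j, if c j = k then r j else 0) = if k ∈ s then R k else 0 := by
      rw [hrdef]
      rw [h2 (fun b => if b = k then R b else 0), Finset.sum_ite_eq' s k R]
    rw [hRside2]
    by_cases hks : k ∈ s
    · rw [if_pos hks]
    · rw [if_neg hks]
      simp only [hR]
      apply Finset.sum_eq_zero
      intro i hi
      rw [Finset.mem_filter] at hi
      refine absurd ?_ hks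
      rw [hs, Finset.mem_image]
      exact ⟨i, Finset.mem_filter.mpr ⟨Finset.mem_univ i, hi.2.1⟩, hi.2.2⟩
  · -- work value
    have hstep : ∀ j, r j * (β⁻¹ * Real.log (Z * c j / r j) - -(β⁻¹ * Real.log (r j)))
        = r j * (β⁻¹ * Real.log (Z * c j)) := by
      intro j
      have h1 : Real.log (Z * c j / r j) = Real.log (Z * c j) - Real.log (r j) := by
        exact Real.log_div (mul_pos hZ (hc_pos j)).ne' (hr_pos j).ne'
      rw [h1]; ring
    rw [Finset.sum_congr rfl (fun j _ => hstep j)]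
    rw [key (fun x => β⁻¹ * Real.log (Z * x))]
    rw [D1]
    have hfilt : Finset.univ.filter (fun i => p i ≠ 0)
        = Finset.univ.filter (fun i => 0 < p i) := by
      apply Finset.filter_congr
      intro i _
      constructor
      · intro h; exact lt_of_le_of_ne (hp0 i) (Ne.symm h)
      · intro h; exact h.ne'
    rw [hfilt, Finset.mul_sum]
    apply Finset.sum_congr rfl
    intro i hi
    rw [Finset.mem_filter] at hi
    have hlog : p i / τ i = Z * (p i * Real.exp (β * E i)) := by
      rw [hτ i, neg_mul, Real.exp_neg]
      field_simp
    rw [hlog]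
    ring
end

section
/- Let α be a real number with 0 < α and α ≠ 1. Let G be a stochastic matrix on Fin n, let p be a probability vector, and let q be a strictly positive probability vector. Then D_α(G · p‖G · q) ≤ D_α(p‖q), where D_α(a‖b) = (α − 1)⁻¹ * Real.log (∑ i, a i ^ α * b i ^ (1 − α)). -/
open Finset

/-- Key pointwise inequality, convex case `1 < α`. -/
lemma key_convex {ι : Type*} (s : Finset ι) (α : ℝ) (hα : 1 < α)
    (w x y : ι → ℝ) (hw : ∀ j ∈ s, 0 ≤ w j) (hx : ∀ j ∈ s, 0 ≤ x j) (hy : ∀ j ∈ s, 0 < y j) :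
    (∑ j ∈ s, w j * x j) ^ α * (∑ j ∈ s, w j * y j) ^ (1 - α) ≤
      ∑ j ∈ s, w j * (x j ^ α * y j ^ (1 - α)) := by
  set A := ∑ j ∈ s, w j * x j with hA
  set B := ∑ j ∈ s, w j * y j with hB
  have hA0 : 0 ≤ A := Finset.sum_nonneg fun j hj => mul_nonneg (hw j hj) (hx j hj)
  have hB0 : 0 ≤ B := Finset.sum_nonneg fun j hj => mul_nonneg (hw j hj) (hy j hj).le
  rcases eq_or_lt_of_le hB0 with hB0' | hBpos
  · -- B = 0, so all w j = 0 on s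
    have hwz : ∀ j ∈ s, w j * y j = 0 := by
      intro j hj
      have := (Finset.sum_eq_zero_iff_of_nonneg
        (fun j hj => mul_nonneg (hw j hj) (hy j hj).le)).1 hB0'.symm
      exact this j hj
    have hwz' : ∀ j ∈ s, w j = 0 := fun j hj => by
      rcases mul_eq_zero.1 (hwz j hj) with h | h
      · exact h
      · exact absurd h (hy j hj).ne'
    have hAz : A = 0 := by
      rw [hA]; exact Finset.sum_eq_zero fun j hj => by rw [hwz' j hj, zero_mul]
    have : (∑ j ∈ s, w j * (x j ^ α * y j ^ (1 - α))) = 0 :=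
      Finset.sum_eq_zero fun j hj => by rw [hwz' j hj, zero_mul]
    rw [hAz, this, Real.zero_rpow (by positivity), zero_mul]
  · -- B > 0, Jensen with weights v j = w j * y j / B
    have key : (A / B) ^ α ≤ ∑ j ∈ s, (w j * y j / B) * (x j / y j) ^ α := by
      have := (convexOn_rpow hα.le).map_sum_le (t := s)
        (w := fun j => w j * y j / B) (p := fun j => x j / y j)
        (fun j hj => div_nonneg (mul_nonneg (hw j hj) (hy j hj).le) hB0)
        (by rw [← Finset.sum_div, ← hB, div_self hBpos.ne'])
        (fun j hj => Set.mem_Ici.2 (div_nonneg (hx j hj) (hy j hj).le))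
      have hAB : (∑ j ∈ s, (w j * y j / B) * (x j / y j)) = A / B := by
        rw [hA, Finset.sum_div]
        apply Finset.sum_congr rfl
        intro j hj
        have h1 : y j ≠ 0 := (hy j hj).ne'
        have h2 : B ≠ 0 := hBpos.ne'
        field_simp
      simpa only [smul_eq_mul, hAB] using this
    have hterm : ∀ j ∈ s, (w j * y j / B) * (x j / y j) ^ α
        = (w j * (x j ^ α * y j ^ (1 - α))) / B := by
      intro j hj
      have h1 : y j ^ α ≠ 0 := (Real.rpow_pos_of_pos (hy j hj) α).ne'
      have h2 : B ≠ 0 := hBpos.ne'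
      rw [Real.div_rpow (hx j hj) (hy j hj).le, Real.rpow_sub (hy j hj), Real.rpow_one]
      field_simp
    rw [Finset.sum_congr rfl hterm, ← Finset.sum_div] at key
    rw [Real.div_rpow hA0 hB0] at key
    have hBα : (0:ℝ) < B ^ α := Real.rpow_pos_of_pos hBpos α
    rw [div_le_div_iff₀ hBα hBpos] at key
    have : A ^ α * B ^ (1 - α) = A ^ α * B / B ^ α := by
      rw [Real.rpow_sub hBpos, Real.rpow_one]; ring
    rw [this, div_le_iff₀ hBα]
    calc A ^ α * B ≤ (∑ j ∈ s, w j * (x j ^ α * y j ^ (1 - α))) * B ^ α := key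
    _ = _ := by ring

/-- Key pointwise inequality, concave case `0 < α < 1`. -/
lemma key_concave {ι : Type*} (s : Finset ι) (α : ℝ) (hα0 : 0 < α) (hα : α < 1)
    (w x y : ι → ℝ) (hw : ∀ j ∈ s, 0 ≤ w j) (hx : ∀ j ∈ s, 0 ≤ x j) (hy : ∀ j ∈ s, 0 < y j) :
    ∑ j ∈ s, w j * (x j ^ α * y j ^ (1 - α)) ≤
      (∑ j ∈ s, w j * x j) ^ α * (∑ j ∈ s, w j * y j) ^ (1 - α) := by
  set A := ∑ j ∈ s, w j * x j with hA
  set B := ∑ j ∈ s, w j * y j with hB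
  have hA0 : 0 ≤ A := Finset.sum_nonneg fun j hj => mul_nonneg (hw j hj) (hx j hj)
  have hB0 : 0 ≤ B := Finset.sum_nonneg fun j hj => mul_nonneg (hw j hj) (hy j hj).le
  rcases eq_or_lt_of_le hB0 with hB0' | hBpos
  · have hwz : ∀ j ∈ s, w j * y j = 0 := by
      intro j hj
      have := (Finset.sum_eq_zero_iff_of_nonneg
        (fun j hj => mul_nonneg (hw j hj) (hy j hj).le)).1 hB0'.symm
      exact this j hj
    have hwz' : ∀ j ∈ s, w j = 0 := fun j hj => by
      rcases mul_eq_zero.1 (hwz j hj) with h | h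
      · exact h
      · exact absurd h (hy j hj).ne'
    have : (∑ j ∈ s, w j * (x j ^ α * y j ^ (1 - α))) = 0 :=
      Finset.sum_eq_zero fun j hj => by rw [hwz' j hj, zero_mul]
    rw [this]
    positivity
  · have key : ∑ j ∈ s, (w j * y j / B) * (x j / y j) ^ α ≤ (A / B) ^ α := by
      have := (Real.concaveOn_rpow hα0.le hα.le).le_map_sum (t := s)
        (w := fun j => w j * y j / B) (p := fun j => x j / y j)
        (fun j hj => div_nonneg (mul_nonneg (hw j hj) (hy j hj).le) hB0)
        (by rw [← Finset.sum_div, ← hB, div_self hBpos.ne'])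
        (fun j hj => Set.mem_Ici.2 (div_nonneg (hx j hj) (hy j hj).le))
      have hAB : (∑ j ∈ s, (w j * y j / B) * (x j / y j)) = A / B := by
        rw [hA, Finset.sum_div]
        apply Finset.sum_congr rfl
        intro j hj
        have h1 : y j ≠ 0 := (hy j hj).ne'
        have h2 : B ≠ 0 := hBpos.ne'
        field_simp
      simpa only [smul_eq_mul, hAB] using this
    have hterm : ∀ j ∈ s, (w j * y j / B) * (x j / y j) ^ α
        = (w j * (x j ^ α * y j ^ (1 - α))) / B := by
      intro j hj
      have h1 : y j ^ α ≠ 0 := (Real.rpow_pos_of_pos (hy j hj) α).ne'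
      have h2 : B ≠ 0 := hBpos.ne'
      rw [Real.div_rpow (hx j hj) (hy j hj).le, Real.rpow_sub (hy j hj), Real.rpow_one]
      field_simp
    rw [Finset.sum_congr rfl hterm, ← Finset.sum_div] at key
    rw [Real.div_rpow hA0 hB0] at key
    have hBα : (0:ℝ) < B ^ α := Real.rpow_pos_of_pos hBpos α
    rw [div_le_div_iff₀ hBpos hBα] at key
    have hEq : A ^ α * B ^ (1 - α) = A ^ α * B / B ^ α := by
      rw [Real.rpow_sub hBpos, Real.rpow_one]; ring
    rw [hEq, le_div_iff₀ hBα]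
    calc (∑ j ∈ s, w j * (x j ^ α * y j ^ (1 - α))) * B ^ α ≤ A ^ α * B := key
    _ = _ := rfl

/-- Data-processing inequality for the Rényi α-divergence (`0 < α`, `α ≠ 1`) under a
stochastic map. -/
theorem renyi_data_processing
    (α : ℝ) (hα0 : 0 < α) (hα1 : α ≠ 1)
    {n : ℕ} (G : Fin n → Fin n → ℝ)
    (hG0 : ∀ i j, 0 ≤ G i j) (hG1 : ∀ j, ∑ i, G i j = 1)
    (p : Fin n → ℝ) (hp0 : ∀ i, 0 ≤ p i) (hp1 : ∑ i, p i = 1)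
    (q : Fin n → ℝ) (hq0 : ∀ i, 0 < q i) (hq1 : ∑ i, q i = 1) :
    Dalpha α (fun i => ∑ j, G i j * p j) (fun i => ∑ j, G i j * q j) ≤
      Dalpha α p q := by
  have hsum : ∑ i, ∑ j, G i j * (p j ^ α * q j ^ (1 - α))
      = ∑ j, p j ^ α * q j ^ (1 - α) := by
    rw [Finset.sum_comm]
    apply Finset.sum_congr rfl
    intro j _
    rw [← Finset.sum_mul, hG1 j, one_mul]
  set S := ∑ j, p j ^ α * q j ^ (1 - α) with hS
  set S' := ∑ i, (∑ j, G i j * p j) ^ α * (∑ j, G i j * q j) ^ (1 - α) with hS'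
  -- positivity facts
  obtain ⟨j₀, hj₀⟩ : ∃ j, 0 < p j := by
    by_contra h
    push_neg at h
    have : ∑ i, p i = 0 := le_antisymm (Finset.sum_nonpos fun i _ => h i)
      (Finset.sum_nonneg fun i _ => hp0 i)
    rw [hp1] at this; norm_num at this
  have hSpos : 0 < S := by
    rw [hS]
    apply Finset.sum_pos' (fun j _ => mul_nonneg (Real.rpow_nonneg (hp0 j) α)
      (Real.rpow_nonneg (hq0 j).le _))
    exact ⟨j₀, Finset.mem_univ j₀, mul_pos (Real.rpow_pos_of_pos hj₀ α)
      (Real.rpow_pos_of_pos (hq0 j₀) _)⟩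
  rcases lt_or_gt_of_ne hα1 with hlt | hgt
  · -- 0 < α < 1: S ≤ S', coefficient negative
    have hle : S ≤ S' := by
      rw [hS', ← hsum]
      exact Finset.sum_le_sum fun i _ => key_concave Finset.univ α hα0 hlt (G i) p q
        (fun j _ => hG0 i j) (fun j _ => hp0 j) (fun j _ => hq0 j)
    have hlog : Real.log S ≤ Real.log S' := Real.log_le_log hSpos hle
    have hcoef : (α - 1)⁻¹ ≤ 0 := by
      apply inv_nonpos.2; linarith
    unfold Dalpha
    exact mul_le_mul_of_nonpos_left hlog hcoef
  · -- α > 1: S' ≤ S, coefficient positive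
    have hle : S' ≤ S := by
      rw [hS', ← hsum]
      exact Finset.sum_le_sum fun i _ => key_convex Finset.univ α hgt (G i) p q
        (fun j _ => hG0 i j) (fun j _ => hp0 j) (fun j _ => hq0 j)
    -- S' > 0
    have hP1 : ∑ i, ∑ j, G i j * p j = 1 := by
      rw [Finset.sum_comm]
      calc ∑ j, ∑ i, G i j * p j = ∑ j, (∑ i, G i j) * p j := by
            simp [Finset.sum_mul]
      _ = 1 := by simp only [hG1, one_mul, hp1]
    obtain ⟨i₀, hi₀⟩ : ∃ i, 0 < ∑ j, G i j * p j := by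
      by_contra h
      push_neg at h
      have : ∑ i, ∑ j, G i j * p j = 0 := le_antisymm (Finset.sum_nonpos fun i _ => h i)
        (Finset.sum_nonneg fun i _ => Finset.sum_nonneg fun j _ =>
          mul_nonneg (hG0 i j) (hp0 j))
      rw [hP1] at this; norm_num at this
    have hQi₀ : 0 < ∑ j, G i₀ j * q j := by
      obtain ⟨j₁, _, hj₁⟩ := Finset.exists_lt_of_sum_lt (f := fun _ => (0:ℝ))
        (by simpa using hi₀)
      have hGpos : 0 < G i₀ j₁ := by
        rcases lt_or_eq_of_le (hG0 i₀ j₁) with h | h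
        · exact h
        · exfalso; rw [← h, zero_mul] at hj₁; exact lt_irrefl 0 hj₁
      have := Finset.single_le_sum (f := fun j => G i₀ j * q j)
        (fun j _ => mul_nonneg (hG0 i₀ j) (hq0 j).le) (Finset.mem_univ j₁)
      exact lt_of_lt_of_le (mul_pos hGpos (hq0 j₁)) this
    have hS'pos : 0 < S' := by
      rw [hS']
      apply Finset.sum_pos' (fun i _ => mul_nonneg
        (Real.rpow_nonneg (Finset.sum_nonneg fun j _ => mul_nonneg (hG0 i j) (hp0 j)) α)
        (Real.rpow_nonneg (Finset.sum_nonneg fun j _ => mul_nonneg (hG0 i j) (hq0 j).le) _))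
      exact ⟨i₀, Finset.mem_univ i₀, mul_pos (Real.rpow_pos_of_pos hi₀ α)
        (Real.rpow_pos_of_pos hQi₀ _)⟩
    have hlog : Real.log S' ≤ Real.log S := Real.log_le_log hS'pos hle
    have hcoef : (0:ℝ) ≤ (α - 1)⁻¹ := by
      apply inv_nonneg.2; linarith
    unfold Dalpha
    exact mul_le_mul_of_nonneg_left hlog hcoef
end

section
/- Let W₀, W₁ ∈ ℝ, β > 0, let p be a probability vector on Fin n, and let τ be a strictly positive probability vector on Fin n. If for every real α with 0 < α and α ≠ 1 one has β * (W₁ − W₀) ≤ D_α(p‖τ), where D_α(p‖τ) = (α − 1)⁻¹ * Real.log (∑ i in {i | p i ≠ 0}, p i ^ α * τ i ^ (1 − α)), then β * (W₁ − W₀) ≤ D₀(p‖τ) = −Real.log (∑ i in {i | p i ≠ 0}, τ i). -/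
/-!
At `α = 0` the sum `∑_{p i ≠ 0} p i ^ α * τ i ^ (1 - α)` equals `∑_{p i ≠ 0} τ i`, and it is
continuous in `α` there because every base `p i` in it is nonzero. Hence `D_α(p‖τ) → D₀(p‖τ)`
as `α → 0⁺`, and the bound by all `D_α` passes to the limit.
-/

open Filter Topology Finset

section RenyiLimit

variable {ι : Type*} (s : Finset ι) {p τ : ι → ℝ}

theorem continuousAt_sum_rpow_mul_rpow_one_sub_zero (hp : ∀ i ∈ s, p i ≠ 0) :
    ContinuousAt (fun α : ℝ => ∑ i ∈ s, p i ^ α * τ i ^ (1 - α)) 0 :=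
  tendsto_finsetSum s fun i hi =>
    (continuousAt_const.rpow continuousAt_id (Or.inl (hp i hi))).mul
      (continuousAt_const.rpow (continuousAt_const.sub continuousAt_id) (Or.inr (by simp)))

theorem tendsto_inv_sub_one_mul_log_sum_rpow_mul_rpow_one_sub (hp : ∀ i ∈ s, p i ≠ 0)
    (hτ : ∑ i ∈ s, τ i ≠ 0) :
    Tendsto (fun α : ℝ => (α - 1)⁻¹ * Real.log (∑ i ∈ s, p i ^ α * τ i ^ (1 - α))) (𝓝 0)
      (𝓝 (-Real.log (∑ i ∈ s, τ i))) := by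
  have hinv : ContinuousAt (fun α : ℝ => (α - 1)⁻¹) 0 :=
    (continuousAt_id.sub continuousAt_const).inv₀ (by norm_num)
  have hlog := (continuousAt_sum_rpow_mul_rpow_one_sub_zero s hp).log (by simpa using hτ)
  simpa using hinv.tendsto.mul hlog.tendsto

end RenyiLimit

theorem work_bounded_by_D0_of_bounded_by_all_renyi_general
    {n : ℕ} (W₀ W₁ : ℝ) (β : ℝ)
    (p : Fin n → ℝ) (hp1 : ∑ i, p i = 1)
    (τ : Fin n → ℝ) (hτ0 : ∀ i, 0 < τ i)
    (h : ∀ α : ℝ, 0 < α → α ≠ 1 →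
      β * (W₁ - W₀) ≤ (α - 1)⁻¹ *
        Real.log (∑ i ∈ Finset.univ.filter (fun i => p i ≠ 0),
          p i ^ α * τ i ^ (1 - α))) :
    β * (W₁ - W₀) ≤
      -Real.log (∑ i ∈ Finset.univ.filter (fun i => p i ≠ 0), τ i) := by
  set S := univ.filter fun i => p i ≠ 0
  have hS : S.Nonempty :=
    nonempty_of_sum_ne_zero (f := p) (by rw [sum_filter_ne_zero, hp1]; exact one_ne_zero)
  have hlim := (tendsto_inv_sub_one_mul_log_sum_rpow_mul_rpow_one_sub S
    (fun i hi => (mem_filter.1 hi).2) (sum_pos (fun i _ => hτ0 i) hS).ne').mono_left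
    (nhdsWithin_le_nhds (s := Set.Ioi 0))
  refine ge_of_tendsto hlim ?_
  filter_upwards [Ioo_mem_nhdsGT one_pos] with α hα using h α hα.1 hα.2.ne

/-- If a work value is bounded by every α-Rényi divergence (`0 < α`, `α ≠ 1`), then it
is bounded by `D₀`: the catalytic deterministic work extraction bound
`W₁ − W₀ ≤ k_B T D₀(p‖τ)`. -/
theorem work_bounded_by_D0_of_bounded_by_all_renyi
    {n : ℕ} (W₀ W₁ : ℝ) (β : ℝ) (hβ : 0 < β)
    (p : Fin n → ℝ) (hp0 : ∀ i, 0 ≤ p i) (hp1 : ∑ i, p i = 1)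
    (τ : Fin n → ℝ) (hτ0 : ∀ i, 0 < τ i) (hτ1 : ∑ i, τ i = 1)
    (h : ∀ α : ℝ, 0 < α → α ≠ 1 →
      β * (W₁ - W₀) ≤ (α - 1)⁻¹ *
        Real.log (∑ i ∈ Finset.univ.filter (fun i => p i ≠ 0),
          p i ^ α * τ i ^ (1 - α))) :
    β * (W₁ - W₀) ≤
      -Real.log (∑ i ∈ Finset.univ.filter (fun i => p i ≠ 0), τ i) :=
  work_bounded_by_D0_of_bounded_by_all_renyi_general W₀ W₁ β p hp1 τ hτ0 h
end
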